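/- arXiv:math/0701890 — 2 statements merged into one kernel-verified Lean document; each statement's English description precedes it below -/
import Mathlib

section
/- Let M, N ≥ 1. If M ≡ 1 (mod 3) or N ≡ 1 (mod 3), then the alternating number of independent sets of the tilted rectangle 𝓡(M,N) is zero: Z_𝓡(M,N) = 0. -/
/-- Two vertices of the grid `ℤ²` are adjacent iff they are at distance 1. -/
def GridAdj (p q : ℤ × ℤ) : Prop := |p.1 - q.1| + |p.2 - q.2| = 1

instance : DecidableRel GridAdj := fun p q => by unfold GridAdj; infer_instance

/-- The alternating number of independent sets of the subgraph of `ℤ²`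
induced by the finite vertex set `V`: `Z = Σ_I (-1)^|I|` over independent sets `I ⊆ V`. -/
def altZ (V : Finset (ℤ × ℤ)) : ℤ :=
  ∑ I ∈ V.powerset.filter (fun I => ∀ p ∈ I, ∀ q ∈ I, ¬ GridAdj p q),
    (-1 : ℤ) ^ I.card


open Finset

lemma gridAdj_iff (p q : ℤ × ℤ) :
    GridAdj p q ↔ (p.1 - q.1).natAbs + (p.2 - q.2).natAbs = 1 := by
  unfold GridAdj
  rw [Int.abs_eq_natAbs, Int.abs_eq_natAbs]
  omega

lemma gridAdj_comm (p q : ℤ × ℤ) : GridAdj p q ↔ GridAdj q p := by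
  rw [gridAdj_iff, gridAdj_iff]; omega

def indepSets (V : Finset (ℤ × ℤ)) : Finset (Finset (ℤ × ℤ)) :=
  V.powerset.filter (fun I => ∀ p ∈ I, ∀ q ∈ I, ¬ GridAdj p q)

lemma altZ_eq (V : Finset (ℤ × ℤ)) :
    altZ V = ∑ I ∈ indepSets V, (-1 : ℤ) ^ I.card := rfl

lemma mem_indepSets {V I : Finset (ℤ × ℤ)} :
    I ∈ indepSets V ↔ I ⊆ V ∧ ∀ p ∈ I, ∀ q ∈ I, ¬ GridAdj p q := by
  simp [indepSets]

lemma altZ_eq_zero_of_isolated {V : Finset (ℤ × ℤ)} {p : ℤ × ℤ} (hp : p ∈ V)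
    (hiso : ∀ q ∈ V, ¬ GridAdj p q) : altZ V = 0 := by
  have hiso' : ∀ q ∈ V, ¬ GridAdj q p := fun q hq h => hiso q hq ((gridAdj_comm q p).mp h)
  rw [altZ_eq]
  refine Finset.sum_involution (fun I _ => if p ∈ I then I.erase p else insert p I)
    ?_ ?_ ?_ ?_
  · intro I hI
    by_cases h : p ∈ I
    · simp only [h, if_true]
      have : I.card = (I.erase p).card + 1 := (Finset.card_erase_add_one h).symm
      rw [this, pow_succ]; ring
    · simp only [h, if_false]
      rw [Finset.card_insert_of_notMem h, pow_succ]; ring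
  · intro I hI _
    by_cases h : p ∈ I
    · simp only [h, if_true]
      intro heq
      have h2 : p ∈ I.erase p := by rw [heq]; exact h
      simp at h2
    · simp only [h, if_false]
      intro heq
      exact h (heq ▸ Finset.mem_insert_self p I)
  · intro I hI
    rw [mem_indepSets] at hI ⊢
    by_cases h : p ∈ I
    · simp only [h, if_true]
      exact ⟨(Finset.erase_subset p I).trans hI.1,
        fun a ha b hb => hI.2 a (Finset.mem_of_mem_erase ha) b (Finset.mem_of_mem_erase hb)⟩
    · simp only [h, if_false]
      refine ⟨Finset.insert_subset hp hI.1, ?_⟩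
      intro a ha b hb
      rw [Finset.mem_insert] at ha hb
      rcases ha with ha | ha
      · subst ha
        rcases hb with hb | hb
        · subst hb; intro hc; rw [gridAdj_iff] at hc; omega
        · exact hiso b (hI.1 hb)
      · rcases hb with hb | hb
        · subst hb; exact hiso' a (hI.1 ha)
        · exact hI.2 a ha b hb
  · intro I hI
    by_cases h : p ∈ I
    · simp only [h, if_true]
      have h2 : p ∉ I.erase p := Finset.notMem_erase p I
      simp only [h2, if_false]
      exact Finset.insert_erase h
    · simp only [h, if_false]
      have h2 : p ∈ insert p I := Finset.mem_insert_self p I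
      simp only [h2, if_true]
      exact Finset.erase_insert h

lemma altZ_delete {V : Finset (ℤ × ℤ)} {p : ℤ × ℤ} (hp : p ∈ V) :
    altZ V = altZ (V.erase p)
      - altZ ((V.erase p).filter (fun q => ¬ GridAdj q p)) := by
  have hsplit := Finset.sum_filter_add_sum_filter_not (indepSets V)
    (fun I => p ∈ I) (fun I => (-1 : ℤ) ^ I.card)
  rw [altZ_eq, ← hsplit]
  have h1 : (indepSets V).filter (fun I => ¬ p ∈ I) = indepSets (V.erase p) := by
    ext J
    simp only [Finset.mem_filter, mem_indepSets, Finset.subset_erase]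
    tauto
  have h2 : ∑ I ∈ (indepSets V).filter (fun I => p ∈ I), (-1 : ℤ) ^ I.card
      = - altZ ((V.erase p).filter (fun q => ¬ GridAdj q p)) := by
    rw [altZ_eq, ← Finset.sum_neg_distrib]
    refine Finset.sum_nbij' (fun I => I.erase p) (fun J => insert p J) ?_ ?_ ?_ ?_ ?_
    · intro I hI
      simp only [Finset.mem_filter, mem_indepSets] at hI
      obtain ⟨⟨hIV, hind⟩, hpI⟩ := hI
      rw [mem_indepSets]
      constructor
      · intro q hq
        rw [Finset.mem_erase] at hq
        rw [Finset.mem_filter, Finset.mem_erase]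
        exact ⟨⟨hq.1, hIV hq.2⟩, hind q hq.2 p hpI⟩
      · intro a ha b hb
        exact hind a (Finset.mem_of_mem_erase ha) b (Finset.mem_of_mem_erase hb)
    · intro J hJ
      rw [mem_indepSets] at hJ
      obtain ⟨hJV, hind⟩ := hJ
      have hpJ : p ∉ J := by
        intro hc
        have := hJV hc
        rw [Finset.mem_filter, Finset.mem_erase] at this
        exact this.1.1 rfl
      simp only [Finset.mem_filter, mem_indepSets]
      refine ⟨⟨Finset.insert_subset hp (fun q hq => Finset.mem_of_mem_erase
        ((Finset.mem_filter.mp (hJV hq)).1)), ?_⟩, Finset.mem_insert_self p J⟩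
      intro a ha b hb
      rw [Finset.mem_insert] at ha hb
      rcases ha with ha | ha
      · subst ha
        rcases hb with hb | hb
        · subst hb; intro hc; rw [gridAdj_iff] at hc; omega
        · intro hc
          exact (Finset.mem_filter.mp (hJV hb)).2 ((gridAdj_comm _ _).mp hc)
      · rcases hb with hb | hb
        · subst hb
          exact (Finset.mem_filter.mp (hJV ha)).2
        · exact hind a ha b hb
    · intro I hI
      simp only [Finset.mem_filter] at hI
      exact Finset.insert_erase hI.2
    · intro J hJ
      rw [mem_indepSets] at hJ
      have hpJ : p ∉ J := by
        intro hc
        have := hJ.1 hc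
        rw [Finset.mem_filter, Finset.mem_erase] at this
        exact this.1.1 rfl
      exact Finset.erase_insert hpJ
    · intro I hI
      simp only [Finset.mem_filter] at hI
      have : I.card = (I.erase p).card + 1 := (Finset.card_erase_add_one hI.2).symm
      rw [this, pow_succ]; ring
  rw [h1, h2, ← altZ_eq]
  ring

lemma filter_true_eq (A : Finset (ℤ × ℤ)) :
    A.filter (fun a => ∀ b ∈ (∅ : Finset (ℤ × ℤ)), ¬ GridAdj a b) = A :=
  Finset.filter_true_of_mem (fun a _ => by simp)

lemma altZ_union (B : Finset (ℤ × ℤ)) :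
    ∀ A : Finset (ℤ × ℤ), Disjoint A B → (∀ p ∈ B, ∀ q ∈ B, ¬ GridAdj p q) →
    altZ (A ∪ B) = ∑ S ∈ B.powerset,
      (-1 : ℤ) ^ S.card * altZ (A.filter (fun a => ∀ b ∈ S, ¬ GridAdj a b)) := by
  induction B using Finset.induction_on with
  | empty =>
      intro A _ _
      simp [filter_true_eq]
  | @insert b B0 hb ih =>
      intro A hdisj hind
      have hbA : b ∉ A := fun hc => Finset.disjoint_left.mp hdisj hc (Finset.mem_insert_self b B0)
      have hbB : b ∈ A ∪ insert b B0 := Finset.mem_union_right _ (Finset.mem_insert_self b B0)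
      rw [altZ_delete hbB]
      have he : (A ∪ insert b B0).erase b = A ∪ B0 := by
        rw [Finset.union_insert, Finset.erase_insert]
        rw [Finset.mem_union]
        rintro (h | h)
        · exact hbA h
        · exact hb h
      have hf : (A ∪ B0).filter (fun q => ¬ GridAdj q b)
          = (A.filter (fun q => ¬ GridAdj q b)) ∪ B0 := by
        rw [Finset.filter_union]
        congr 1
        refine Finset.filter_true_of_mem (fun q hq => ?_)
        exact hind q (Finset.mem_insert_of_mem hq) b (Finset.mem_insert_self b B0)
      have hdisj0 : Disjoint A B0 :=
        hdisj.mono_right (Finset.subset_insert b B0)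
      have hdisj0' : Disjoint (A.filter (fun q => ¬ GridAdj q b)) B0 :=
        hdisj0.mono_left (Finset.filter_subset _ _)
      have hind0 : ∀ p ∈ B0, ∀ q ∈ B0, ¬ GridAdj p q := fun p hp q hq =>
        hind p (Finset.mem_insert_of_mem hp) q (Finset.mem_insert_of_mem hq)
      rw [he, hf, ih A hdisj0 hind0, ih _ hdisj0' hind0]
      rw [Finset.sum_powerset_insert hb]
      have hterm : ∀ S ∈ B0.powerset,
          (-1 : ℤ) ^ (insert b S).card * altZ (A.filter (fun a => ∀ c ∈ insert b S, ¬ GridAdj a c))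
          = -((-1 : ℤ) ^ S.card *
              altZ ((A.filter (fun q => ¬ GridAdj q b)).filter (fun a => ∀ c ∈ S, ¬ GridAdj a c))) := by
        intro S hS
        rw [Finset.mem_powerset] at hS
        have hbS : b ∉ S := fun hc => hb (hS hc)
        have hcard : (insert b S).card = S.card + 1 := Finset.card_insert_of_notMem hbS
        have hfilt : A.filter (fun a => ∀ c ∈ insert b S, ¬ GridAdj a c)
            = (A.filter (fun q => ¬ GridAdj q b)).filter (fun a => ∀ c ∈ S, ¬ GridAdj a c) := by
          rw [Finset.filter_filter]
          refine Finset.filter_congr (fun a _ => ?_)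
          simp only [Finset.mem_insert]
          constructor
          · intro h
            exact ⟨h b (Or.inl rfl), fun c hc => h c (Or.inr hc)⟩
          · rintro ⟨h1, h2⟩ c (rfl | hc)
            · exact h1
            · exact h2 c hc
        rw [hcard, hfilt, pow_succ]
        ring
      rw [Finset.sum_congr rfl hterm, Finset.sum_neg_distrib]
      ring

lemma altZ_image (f g : ℤ × ℤ → ℤ × ℤ) (hgf : ∀ p, g (f p) = p)
    (hadj : ∀ p q, GridAdj (f p) (f q) ↔ GridAdj p q) (V : Finset (ℤ × ℤ)) :
    altZ (V.image f) = altZ V := by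
  have hinj : Function.Injective f := fun a b h => by rw [← hgf a, h, hgf]
  have hfg : ∀ u, u ∈ V.image f → f (g u) = u := by
    intro u hu
    rw [Finset.mem_image] at hu
    obtain ⟨p, _, rfl⟩ := hu
    rw [hgf]
  rw [altZ_eq, altZ_eq]
  refine (Finset.sum_nbij' (fun I => I.image f) (fun J => J.image g) ?_ ?_ ?_ ?_ ?_).symm
  · intro I hI
    rw [mem_indepSets] at hI ⊢
    refine ⟨Finset.image_subset_image hI.1, ?_⟩
    intro a ha b hb
    rw [Finset.mem_image] at ha hb
    obtain ⟨p, hp, rfl⟩ := ha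
    obtain ⟨q, hq, rfl⟩ := hb
    rw [hadj]
    exact hI.2 p hp q hq
  · intro J hJ
    rw [mem_indepSets] at hJ ⊢
    constructor
    · intro a ha
      rw [Finset.mem_image] at ha
      obtain ⟨u, hu, rfl⟩ := ha
      have := hJ.1 hu
      rw [Finset.mem_image] at this
      obtain ⟨p, hp, rfl⟩ := this
      rwa [hgf]
    · intro a ha b hb
      rw [Finset.mem_image] at ha hb
      obtain ⟨u, hu, rfl⟩ := ha
      obtain ⟨v, hv, rfl⟩ := hb
      intro hc
      rw [← hadj, hfg u (hJ.1 hu), hfg v (hJ.1 hv)] at hc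
      exact hJ.2 u hu v hv hc
  · intro I _
    show Finset.image g (Finset.image f I) = I
    rw [Finset.image_image]
    have : (g ∘ f) = id := funext hgf
    rw [this, Finset.image_id]
  · intro J hJ
    rw [mem_indepSets] at hJ
    show Finset.image f (Finset.image g J) = J
    rw [Finset.image_image]
    rw [Finset.image_congr (g := id), Finset.image_id]
    intro u hu
    exact hfg u (hJ.1 hu)
  · intro I _
    rw [Finset.card_image_of_injective I hinj]

noncomputable def Reg (M n : ℕ) : Finset (ℤ × ℤ) :=
  ((Finset.Icc (-(M + n : ℤ)) (M + n)) ×ˢ (Finset.Icc (-(M + n : ℤ)) (M + n))).filter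
    (fun p => 0 ≤ p.1 - p.2 ∧ p.1 - p.2 ≤ (M : ℤ) - 1 ∧ 0 ≤ p.1 + p.2 ∧ p.1 + p.2 ≤ (n : ℤ) - 1)

lemma mem_Reg {M n : ℕ} {p : ℤ × ℤ} :
    p ∈ Reg M n ↔ 0 ≤ p.1 - p.2 ∧ p.1 - p.2 ≤ (M : ℤ) - 1
      ∧ 0 ≤ p.1 + p.2 ∧ p.1 + p.2 ≤ (n : ℤ) - 1 := by
  simp only [Reg, Finset.mem_filter, Finset.mem_product, Finset.mem_Icc]
  omega

noncomputable def Dg (M n : ℕ) : Finset (ℤ × ℤ) :=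
  (Reg M (n + 1)).filter (fun p => p.1 + p.2 = (n : ℤ))

lemma mem_Dg {M n : ℕ} {p : ℤ × ℤ} :
    p ∈ Dg M n ↔ 0 ≤ p.1 - p.2 ∧ p.1 - p.2 ≤ (M : ℤ) - 1 ∧ p.1 + p.2 = (n : ℤ) := by
  simp only [Dg, Finset.mem_filter, mem_Reg]
  omega

lemma Reg_succ (M n : ℕ) : Reg M (n + 1) = Reg M n ∪ Dg M n := by
  ext p
  simp only [Finset.mem_union, mem_Reg, mem_Dg]
  omega

lemma pathZ : ∀ M : ℕ, M % 3 = 1 → altZ (Reg M 2) = 0 := by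
  intro M
  induction M using Nat.strong_induction_on with
  | _ M ih =>
    intro hM
    rcases Nat.lt_or_ge M 4 with h4 | h4
    · -- M = 1
      have hM1 : M = 1 := by omega
      subst hM1
      refine altZ_eq_zero_of_isolated (p := ((0 : ℤ), (0 : ℤ))) ?_ ?_
      · rw [mem_Reg]; norm_num
      · intro q hq
        rw [mem_Reg] at hq
        rw [gridAdj_iff]
        simp only at hq ⊢
        omega
    · -- M ≥ 4
      set p0 : ℤ × ℤ := (0, 0) with hp0
      set p1 : ℤ × ℤ := (1, 0) with hp1
      set p2 : ℤ × ℤ := (1, -1) with hp2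
      have hMc : (4 : ℤ) ≤ (M : ℤ) := by exact_mod_cast h4
      have hmem0 : p0 ∈ Reg M 2 := by rw [mem_Reg]; simp [hp0]; omega
      have d0 := altZ_delete hmem0
      set V1 := (Reg M 2).erase p0 with hV1
      have hmem1 : p1 ∈ V1 := by
        rw [hV1, Finset.mem_erase, mem_Reg]
        constructor
        · simp [hp1, hp0, Prod.ext_iff]
        · simp [hp1]; omega
      have e1 : V1.filter (fun q => ¬ GridAdj q p0) = V1.erase p1 := by
        ext q
        simp only [Finset.mem_filter, Finset.mem_erase, hV1, mem_Reg, gridAdj_iff,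
          Prod.ext_iff, ne_eq, hp0, hp1]
        omega
      have d1 := altZ_delete hmem1
      set V2 := V1.erase p1 with hV2
      have e2 : V2.filter (fun q => ¬ GridAdj q p1) = V2.erase p2 := by
        ext q
        simp only [Finset.mem_filter, Finset.mem_erase, hV2, hV1, mem_Reg, gridAdj_iff,
          Prod.ext_iff, ne_eq, hp0, hp1, hp2]
        omega
      rw [e2] at d1
      rw [d1, e1] at d0
      -- altZ (Reg M 2) = - altZ (V2.erase p2)
      have dmain : altZ (Reg M 2) = - altZ (V2.erase p2) := by rw [d0]; ring
      have himg : V2.erase p2 = (Reg (M - 3) 2).image (fun p => (2 - p.2, -1 - p.1)) := by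
        ext q
        simp only [Finset.mem_erase, hV2, hV1, Finset.mem_image, mem_Reg, Prod.ext_iff,
          ne_eq, hp0, hp1, hp2]
        constructor
        · rintro ⟨hq2, hq1, hq0, hreg⟩
          refine ⟨(-1 - q.2, 2 - q.1), ?_, ?_⟩
          · have : ((M - 3 : ℕ) : ℤ) = (M : ℤ) - 3 := by omega
            rw [this]
            omega
          · constructor <;> ring
        · rintro ⟨p, hp, hpq1, hpq2⟩
          have : ((M - 3 : ℕ) : ℤ) = (M : ℤ) - 3 := by omega
          rw [this] at hp
          constructor
          · omega
          constructor
          · omega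
          constructor
          · omega
          · omega
      have hIH : altZ (Reg (M - 3) 2) = 0 := ih (M - 3) (by omega) (by omega)
      rw [dmain, himg,
        altZ_image (fun p => (2 - p.2, -1 - p.1)) (fun p => (-1 - p.2, 2 - p.1))
          (fun p => by simp) (fun p q => by rw [gridAdj_iff, gridAdj_iff]; simp only []; omega),
        hIH]
      ring

lemma Qlem (M : ℕ) (hM : M % 3 = 1) :
    ∀ n, 2 ≤ n → ∀ S : Finset (ℤ × ℤ), S ⊆ Dg M n →
      altZ ((Reg M n).filter (fun a => ∀ b ∈ S, ¬ GridAdj a b)) = 0 := by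
  intro n hn
  induction n, hn using Nat.le_induction with
  | base =>
      intro S hS
      rcases S.eq_empty_or_nonempty with rfl | ⟨s, hs⟩
      · rw [filter_true_eq]
        exact pathZ M hM
      · have hsD := hS hs
        rw [mem_Dg] at hsD
        refine altZ_eq_zero_of_isolated (p := (s.1 - 1, s.2 - 1)) ?_ ?_
        · rw [Finset.mem_filter, mem_Reg]
          refine ⟨?_, ?_⟩
          · simp only
            omega
          · intro b hb
            have hbD := hS hb
            rw [mem_Dg] at hbD
            rw [gridAdj_iff]
            simp only
            omega
        · intro q hq
          rw [Finset.mem_filter, mem_Reg] at hq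
          obtain ⟨hqR, hqS⟩ := hq
          intro hadj
          rw [gridAdj_iff] at hadj
          simp only at hadj
          apply hqS s hs
          rw [gridAdj_iff]
          omega
  | succ n hn ih =>
      intro S hS
      have hsplitreg : (Reg M (n + 1)).filter (fun a => ∀ b ∈ S, ¬ GridAdj a b)
          = Reg M n ∪ (Dg M n).filter (fun a => ∀ b ∈ S, ¬ GridAdj a b) := by
        rw [Reg_succ, Finset.filter_union]
        congr 1
        refine Finset.filter_true_of_mem ?_
        intro a ha b hb
        have hbD := hS hb
        rw [mem_Dg] at hbD
        rw [mem_Reg] at ha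
        rw [gridAdj_iff]
        omega
      rw [hsplitreg]
      have hdisj : Disjoint (Reg M n) ((Dg M n).filter (fun a => ∀ b ∈ S, ¬ GridAdj a b)) := by
        rw [Finset.disjoint_left]
        intro a ha hb
        rw [mem_Reg] at ha
        have haD := Finset.mem_of_mem_filter a hb
        rw [mem_Dg] at haD
        omega
      have hBind : ∀ p ∈ (Dg M n).filter (fun a => ∀ b ∈ S, ¬ GridAdj a b),
          ∀ q ∈ (Dg M n).filter (fun a => ∀ b ∈ S, ¬ GridAdj a b), ¬ GridAdj p q := by
        intro p hp q hq
        have hp' := Finset.mem_of_mem_filter p hp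
        have hq' := Finset.mem_of_mem_filter q hq
        rw [mem_Dg] at hp' hq'
        rw [gridAdj_iff]
        omega
      rw [altZ_union _ _ hdisj hBind]
      refine Finset.sum_eq_zero ?_
      intro Ssub hSsub
      rw [Finset.mem_powerset] at hSsub
      have hsub : Ssub ⊆ Dg M n := hSsub.trans (Finset.filter_subset _ _)
      rw [ih Ssub hsub, mul_zero]

/-- The tilted rectangle `𝓡(M,N)`: points `(x,y)` with `y ≤ x ≤ y+M-1` and
`-y ≤ x ≤ -y+N-1` (cut out of a bounding box that contains all such points). -/
noncomputable def rectR (M N : ℕ) : Finset (ℤ × ℤ) :=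
  ((Finset.Icc (-(M + N : ℤ)) (M + N)) ×ˢ (Finset.Icc (-(M + N : ℤ)) (M + N))).filter
    (fun p => p.2 ≤ p.1 ∧ p.1 ≤ p.2 + M - 1 ∧ -p.2 ≤ p.1 ∧ p.1 ≤ -p.2 + N - 1)


lemma rectR_eq (M N : ℕ) : rectR M N = Reg M N := by
  ext p
  simp only [rectR, Reg, Finset.mem_filter, Finset.mem_product, Finset.mem_Icc]
  omega

lemma Reg_swap (M N : ℕ) : Reg M N = (Reg N M).image (fun p => (p.1, -p.2)) := by
  ext q
  simp only [Finset.mem_image, mem_Reg, Prod.ext_iff]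
  constructor
  · intro h
    refine ⟨(q.1, -q.2), ?_, by simp, by simp⟩
    show 0 ≤ q.1 - -q.2 ∧ q.1 - -q.2 ≤ (N : ℤ) - 1 ∧ 0 ≤ q.1 + -q.2 ∧ q.1 + -q.2 ≤ (M : ℤ) - 1
    omega
  · rintro ⟨p, hp, h1, h2⟩
    omega

lemma key (M N : ℕ) (hM : 1 ≤ M) (hN : 1 ≤ N) (h : M % 3 = 1) : altZ (Reg M N) = 0 := by
  rcases Nat.lt_or_ge N 2 with h2 | h2
  · have hN1 : N = 1 := by omega
    subst hN1
    refine altZ_eq_zero_of_isolated (p := ((0 : ℤ), (0 : ℤ))) ?_ ?_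
    · rw [mem_Reg]; simp only; omega
    · intro q hq
      rw [mem_Reg] at hq
      rw [gridAdj_iff]
      simp only at hq ⊢
      omega
  · have := Qlem M h N h2 ∅ (Finset.empty_subset _)
    rwa [filter_true_eq] at this

/-- If `M ≡ 1` or `N ≡ 1 (mod 3)`, then `Z_𝓡(M,N) = 0`. -/
theorem altZ_rectR_eq_zero (M N : ℕ) (hM : 1 ≤ M) (hN : 1 ≤ N)
    (h : M % 3 = 1 ∨ N % 3 = 1) :
    altZ (rectR M N) = 0 := by
  rw [rectR_eq]
  rcases h with h | h
  · exact key M N hM hN h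
  · rw [Reg_swap M N,
      altZ_image (fun p => (p.1, -p.2)) (fun p => (p.1, -p.2)) (fun p => by simp)
        (fun p q => by rw [gridAdj_iff, gridAdj_iff]; simp only; omega)]
    exact key N M hN hM h
end

section
/- Let N ≥ 1 with N ≡ 1 (mod 3), and let M > 2^{1+⌈N/2⌉}. Then for every pair of sets C, D of vertices, the alternating number Z_𝓡(M,N;C,D) of independent sets of the rectangle 𝓡(M,N) whose intersection with the first extreme diagonal equals C and whose intersection with the last extreme diagonal equals D is zero. -/
/-- The alternating number `Z_𝓡(M,N;C,D)` of independent sets of `𝓡(M,N)` whose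
intersection with the extreme diagonal `x-y = 0` is `C` and whose intersection with
the extreme diagonal `x-y = M-1` is `D`. -/
noncomputable def altZBorderR (M N : ℕ) (C D : Finset (ℤ × ℤ)) : ℤ :=
  ∑ I ∈ (rectR M N).powerset.filter
      (fun I => (∀ p ∈ I, ∀ q ∈ I, ¬ GridAdj p q)
        ∧ I.filter (fun p => p.1 - p.2 = 0) = C
        ∧ I.filter (fun p => p.1 - p.2 = (M : ℤ) - 1) = D),
    (-1 : ℤ) ^ I.card


namespace AltZAux
open Finset

/-- Integer indicator of a proposition. -/
def ind (p : Prop) [Decidable p] : ℤ := if p then 1 else 0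

lemma ind_and (p q : Prop) [Decidable p] [Decidable q] :
    ind (p ∧ q) = ind p * ind q := by
  by_cases hp : p <;> by_cases hq : q <;> simp [ind, hp, hq]

lemma ind_congr {p q : Prop} [Decidable p] [Decidable q] (h : p ↔ q) : ind p = ind q := by
  by_cases hp : p
  · rw [ind, if_pos hp, ind, if_pos (h.mp hp)]
  · rw [ind, if_neg hp, ind, if_neg (fun hc => hp (h.mpr hc))]

lemma ind_true {p : Prop} [Decidable p] (h : p) : ind p = 1 := if_pos h
lemma ind_false {p : Prop} [Decidable p] (h : ¬ p) : ind p = 0 := if_neg h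

def nadj (a b : ℕ) : Prop := a + 1 = b ∨ b + 1 = a
instance : DecidableRel nadj := fun a b => by unfold nadj; infer_instance

lemma nadj_comm {a b : ℕ} : nadj a b ↔ nadj b a := or_comm

def ncompat (A B : Finset ℕ) : Prop := ∀ a ∈ A, ∀ b ∈ B, ¬ nadj a b
instance ncompat.dec : ∀ A B, Decidable (ncompat A B) := fun A B => by
  unfold ncompat; infer_instance

lemma ncompat_comm {A B : Finset ℕ} : ncompat A B ↔ ncompat B A := by
  constructor <;> (intro h a ha b hb hn; exact h b hb a ha (nadj_comm.mp hn))

def ndom (X Y E : Finset ℕ) : Prop := ∀ e ∈ E, ∃ r ∈ X ∪ Y, nadj r e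
instance ndom.dec : ∀ X Y E, Decidable (ndom X Y E) := fun X Y E => by
  unfold ndom; infer_instance

/-- Collapse of a sum over a powerset at a single subset. -/
lemma sum_powerset_ind_eq {α : Type} [DecidableEq α] (V b : Finset α) (f : Finset α → ℤ) :
    ∑ Q ∈ V.powerset, ind (Q = b) * f Q = ind (b ⊆ V) * f b := by
  have h : ∀ Q ∈ V.powerset, ind (Q = b) * f Q = if Q = b then f Q else 0 := by
    intro Q _; by_cases h : Q = b <;> simp [ind, h]
  rw [Finset.sum_congr rfl h, Finset.sum_ite_eq' _ b f]
  by_cases hb : b ⊆ V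
  · rw [if_pos (mem_powerset.mpr hb), ind_true hb, one_mul]
  · rw [if_neg (fun hc => hb (mem_powerset.mp hc)), ind_false hb, zero_mul]

/-- KEY identity: alternating sum over subsets compatible with X and Y. -/
lemma key (V X Y : Finset ℕ) :
    ∑ A ∈ V.powerset, ind (ncompat A X) * ind (ncompat A Y) * (-1:ℤ)^A.card
      = ind (ndom X Y V) := by
  classical
  set F := V.filter (fun a => (∀ x ∈ X, ¬ nadj a x) ∧ (∀ y ∈ Y, ¬ nadj a y)) with hF
  have hsub : F ⊆ V := filter_subset _ _
  have hmem : ∀ A, A ⊆ V → ((ncompat A X ∧ ncompat A Y) ↔ A ⊆ F) := by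
    intro A hAV
    constructor
    · rintro ⟨h1, h2⟩ a ha
      exact Finset.mem_filter.mpr ⟨hAV ha, fun x hx => h1 a ha x hx, fun y hy => h2 a ha y hy⟩
    · intro hAF
      constructor
      · intro a ha x hx; exact (Finset.mem_filter.mp (hAF ha)).2.1 x hx
      · intro a ha y hy; exact (Finset.mem_filter.mp (hAF ha)).2.2 y hy
  have step1 : ∑ A ∈ V.powerset, ind (ncompat A X) * ind (ncompat A Y) * (-1:ℤ)^A.card
      = ∑ A ∈ F.powerset, (-1:ℤ)^A.card := by
    have h : ∀ A ∈ V.powerset, ind (ncompat A X) * ind (ncompat A Y) * (-1:ℤ)^A.card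
        = if A ∈ F.powerset then (-1:ℤ)^A.card else 0 := by
      intro A hA
      rw [mem_powerset] at hA
      by_cases h : A ⊆ F
      · obtain ⟨h1, h2⟩ := (hmem A hA).mpr h
        rw [ind_true h1, ind_true h2, if_pos (mem_powerset.mpr h)]; ring
      · rw [if_neg (fun hc => h (mem_powerset.mp hc))]
        rcases not_and_or.mp (fun hc => h ((hmem A hA).mp hc)) with h1 | h1
        · rw [ind_false h1]; ring
        · rw [ind_false h1]; ring
    rw [Finset.sum_congr rfl h, Finset.sum_ite_mem,
      Finset.inter_eq_right.mpr (Finset.powerset_mono.mpr hsub)]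
  rw [step1, Finset.sum_powerset_neg_one_pow_card]
  have : F = ∅ ↔ ndom X Y V := by
    constructor
    · intro hFe e he
      by_contra hc
      push_neg at hc
      have : e ∈ F := by
        refine Finset.mem_filter.mpr ⟨he, ?_, ?_⟩
        · intro x hx hn; exact hc x (mem_union_left _ hx) (nadj_comm.mp hn)
        · intro y hy hn; exact hc y (mem_union_right _ hy) (nadj_comm.mp hn)
      rw [hFe] at this; exact absurd this (Finset.notMem_empty e)
    · intro hd
      rw [Finset.eq_empty_iff_forall_notMem]
      intro a ha
      obtain ⟨hav, h1, h2⟩ := Finset.mem_filter.mp ha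
      obtain ⟨r, hr, hra⟩ := hd a hav
      rcases mem_union.mp hr with h | h
      · exact h1 r h (nadj_comm.mp hra)
      · exact h2 r h (nadj_comm.mp hra)
  rw [show (if F = ∅ then (1:ℤ) else 0) = ind (F = ∅) from rfl, ind_congr this]

/-- KEY identity, flipped compatibility orientation. -/
lemma key_flip (V X Y : Finset ℕ) :
    ∑ A ∈ V.powerset, ind (ncompat X A) * ind (ncompat Y A) * (-1:ℤ)^A.card
      = ind (ndom X Y V) := by
  rw [← key V X Y]
  apply Finset.sum_congr rfl
  intro A _
  rw [ind_congr (ncompat_comm (A := X) (B := A)), ind_congr (ncompat_comm (A := Y) (B := A))]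

/-- Signed domination-chain sum. -/
def Zc (V E : Finset ℕ) : ℕ → Finset ℕ → Finset ℕ → ℤ
  | 0, R, R' => ind (R = R')
  | m+1, R, R' => ∑ Q ∈ V.powerset, ind (ndom R Q E) * ((-1:ℤ)^Q.card * Zc V E m Q R')

/-- Signed compatibility-chain sum with alternating layer classes. -/
def ZL : Finset ℕ → Finset ℕ → ℕ → Finset ℕ → Finset ℕ → ℤ
  | _, _, 0, A, A' => ind (A = A')
  | V, W, m+1, A, A' => ∑ B ∈ W.powerset, ind (ncompat A B) * ((-1:ℤ)^B.card * ZL W V m B A')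

lemma Zc_zero (V E R R') : Zc V E 0 R R' = ind (R = R') := rfl
lemma Zc_succ (V E m R R') : Zc V E (m+1) R R'
    = ∑ Q ∈ V.powerset, ind (ndom R Q E) * ((-1:ℤ)^Q.card * Zc V E m Q R') := rfl
lemma ZL_zero (V W A A') : ZL V W 0 A A' = ind (A = A') := rfl
lemma ZL_succ (V W m A A') : ZL V W (m+1) A A'
    = ∑ B ∈ W.powerset, ind (ncompat A B) * ((-1:ℤ)^B.card * ZL W V m B A') := rfl

lemma Zc_one (V E S S') :
    Zc V E 1 S S' = ind (S' ⊆ V) * ind (ndom S S' E) * (-1:ℤ)^S'.card := by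
  rw [Zc_succ]
  have h : ∀ Q ∈ V.powerset, ind (ndom S Q E) * ((-1:ℤ)^Q.card * Zc V E 0 Q S')
      = ind (Q = S') * (ind (ndom S Q E) * (-1:ℤ)^Q.card) := by
    intro Q _
    rw [Zc_zero]
    by_cases h : Q = S' <;> simp [ind, h]
  rw [Finset.sum_congr rfl h, sum_powerset_ind_eq]
  ring

/-- Un-collapse: a compat-chain of even length equals the domination-chain collapse. -/
lemma uncoll (V E : Finset ℕ) : ∀ (m : ℕ) (S S' : Finset ℕ), S' ⊆ V →
    ZL V E (2*m) S S' = Zc V E m S S' := by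
  intro m
  induction m with
  | zero => intro S S' _; rfl
  | succ m IH =>
    intro S S' hS'
    have h2 : 2*(m+1) = (2*m+1)+1 := by ring
    rw [h2, ZL_succ]
    have h1 : ∀ P ∈ E.powerset, ind (ncompat S P) * ((-1:ℤ)^P.card * ZL E V (2*m+1) P S')
        = ∑ Q ∈ V.powerset, ind (ncompat S P) * ind (ncompat P Q) * (-1:ℤ)^P.card
            * ((-1:ℤ)^Q.card * ZL V E (2*m) Q S') := by
      intro P _
      rw [ZL_succ, Finset.mul_sum, Finset.mul_sum]
      apply Finset.sum_congr rfl
      intro Q _; ring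
    rw [Finset.sum_congr rfl h1, Finset.sum_comm]
    rw [Zc_succ]
    apply Finset.sum_congr rfl
    intro Q hQ
    rw [IH Q S' hS']
    have : ∑ P ∈ E.powerset, ind (ncompat S P) * ind (ncompat P Q) * (-1:ℤ)^P.card
            * ((-1:ℤ)^Q.card * Zc V E m Q S')
        = (∑ P ∈ E.powerset, ind (ncompat P S) * ind (ncompat P Q) * (-1:ℤ)^P.card)
            * ((-1:ℤ)^Q.card * Zc V E m Q S') := by
      rw [Finset.sum_mul]
      apply Finset.sum_congr rfl
      intro P _
      rw [ind_congr (ncompat_comm (A := S) (B := P))]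
    rw [this, key E S Q]

/-- Collapse of an odd-length compat-chain starting in the `W` class. -/
lemma core (W V : Finset ℕ) : ∀ (m : ℕ) (B A' : Finset ℕ), B ⊆ W → A' ⊆ V →
    ZL W V (2*m+1) B A' = (-1:ℤ)^A'.card *
      ∑ B' ∈ W.powerset, ind (ncompat B' A') * Zc W V m B B' := by
  intro m
  induction m with
  | zero =>
    intro B A' hB hA'
    rw [show 2*0+1 = 0+1 from rfl, ZL_succ]
    have h1 : ∀ A ∈ V.powerset, ind (ncompat B A) * ((-1:ℤ)^A.card * ZL V W 0 A A')
        = ind (A = A') * (ind (ncompat B A) * (-1:ℤ)^A.card) := by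
      intro A _
      rw [ZL_zero]
      by_cases h : A = A' <;> simp [ind, h] <;> ring
    rw [Finset.sum_congr rfl h1, sum_powerset_ind_eq, ind_true hA', one_mul]
    have h2 : ∀ B' ∈ W.powerset, ind (ncompat B' A') * Zc W V 0 B B'
        = ind (B' = B) * ind (ncompat B' A') := by
      intro B' _
      rw [Zc_zero]
      by_cases h : B' = B
      · subst h; by_cases h2 : ncompat B' A' <;> simp [ind, h2]
      · have : ¬ B = B' := fun hc => h hc.symm
        simp [ind, this, h]
    rw [Finset.sum_congr rfl h2, sum_powerset_ind_eq, ind_true hB, one_mul]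
    rw [ind_congr (ncompat_comm (A := B) (B := A'))]
    ring
  | succ m IH =>
    intro B A' hB hA'
    have h2 : 2*(m+1)+1 = ((2*m+1)+1)+1 := by ring
    rw [h2, ZL_succ]
    have h1 : ∀ A ∈ V.powerset, ind (ncompat B A) * ((-1:ℤ)^A.card * ZL V W ((2*m+1)+1) A A')
        = ∑ B₂ ∈ W.powerset, ∑ B' ∈ W.powerset,
            ind (ncompat B A) * ind (ncompat A B₂) * (-1:ℤ)^A.card * (-1:ℤ)^B₂.card
              * ((-1:ℤ)^A'.card * (ind (ncompat B' A') * Zc W V m B₂ B')) := by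
      intro A _
      rw [ZL_succ]
      have h3 : ∀ B₂ ∈ W.powerset, ind (ncompat A B₂) * ((-1:ℤ)^B₂.card * ZL W V (2*m+1) B₂ A')
          = ∑ B' ∈ W.powerset, ind (ncompat A B₂) * (-1:ℤ)^B₂.card
              * ((-1:ℤ)^A'.card * (ind (ncompat B' A') * Zc W V m B₂ B')) := by
        intro B₂ hB₂
        rw [IH B₂ A' (mem_powerset.mp hB₂) hA', Finset.mul_sum, Finset.mul_sum, Finset.mul_sum]
        apply Finset.sum_congr rfl
        intro B' _; ring
      rw [Finset.sum_congr rfl h3, Finset.mul_sum, Finset.mul_sum]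
      apply Finset.sum_congr rfl
      intro B₂ _
      rw [Finset.mul_sum, Finset.mul_sum]
      apply Finset.sum_congr rfl
      intro B' _; ring
    rw [Finset.sum_congr rfl h1]
    -- now a triple sum over A, B₂, B'; reorder to B', B₂, A
    rw [Finset.sum_comm]
    -- now over B₂, A, B'
    have h4 : ∀ B₂ ∈ W.powerset,
        (∑ A ∈ V.powerset, ∑ B' ∈ W.powerset,
          ind (ncompat B A) * ind (ncompat A B₂) * (-1:ℤ)^A.card * (-1:ℤ)^B₂.card
            * ((-1:ℤ)^A'.card * (ind (ncompat B' A') * Zc W V m B₂ B')))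
        = ∑ B' ∈ W.powerset,
            ind (ndom B B₂ V) * (-1:ℤ)^B₂.card
              * ((-1:ℤ)^A'.card * (ind (ncompat B' A') * Zc W V m B₂ B')) := by
      intro B₂ _
      rw [Finset.sum_comm]
      apply Finset.sum_congr rfl
      intro B' _
      have h5 : ∀ A ∈ V.powerset,
          ind (ncompat B A) * ind (ncompat A B₂) * (-1:ℤ)^A.card * (-1:ℤ)^B₂.card
            * ((-1:ℤ)^A'.card * (ind (ncompat B' A') * Zc W V m B₂ B'))
          = (ind (ncompat A B) * ind (ncompat A B₂) * (-1:ℤ)^A.card)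
            * ((-1:ℤ)^B₂.card * ((-1:ℤ)^A'.card * (ind (ncompat B' A') * Zc W V m B₂ B'))) := by
        intro A _
        rw [ind_congr (ncompat_comm (A := B) (B := A))]
        ring
      rw [Finset.sum_congr rfl h5, ← Finset.sum_mul, key V B B₂]
      ring
    rw [Finset.sum_congr rfl h4]
    rw [Finset.sum_comm]
    rw [Finset.mul_sum]
    apply Finset.sum_congr rfl
    intro B' _
    rw [Zc_succ, Finset.mul_sum, Finset.mul_sum]
    apply Finset.sum_congr rfl
    intro B₂ _
    ring

/-- Duality: pass to the complementary-parity domination model, one step shorter. -/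
lemma dualStep (V E : Finset ℕ) (m : ℕ) (S S' : Finset ℕ) (hS' : S' ⊆ V) :
    Zc V E (m+1) S S' = (-1:ℤ)^S'.card *
      ∑ P ∈ E.powerset, ∑ P' ∈ E.powerset,
        ind (ncompat S P) * ind (ncompat P' S') * ((-1:ℤ)^P.card * Zc E V m P P') := by
  have h0 : (2*(m+1) : ℕ) = (2*m+1)+1 := by ring
  rw [← uncoll V E (m+1) S S' hS', h0, ZL_succ]
  have h1 : ∀ P ∈ E.powerset, ind (ncompat S P) * ((-1:ℤ)^P.card * ZL E V (2*m+1) P S')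
      = ∑ P' ∈ E.powerset,
          (-1:ℤ)^S'.card * (ind (ncompat S P) * ind (ncompat P' S') * ((-1:ℤ)^P.card * Zc E V m P P')) := by
    intro P hP
    rw [core E V m P S' (mem_powerset.mp hP) hS']
    simp only [Finset.mul_sum]
    apply Finset.sum_congr rfl
    intro P' _; ring
  rw [Finset.sum_congr rfl h1]
  rw [Finset.mul_sum]
  apply Finset.sum_congr rfl
  intro P _
  rw [Finset.mul_sum]

/-- The boundary factor for eliminating one forced column. -/
def epsZ : ℕ → Bool → Bool → ℤ
  | 0, b, b' => ind (b = b')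
  | m+1, b, b' => (if b then 1 else 0) * epsZ m false b' + (-1) * epsZ m true b'

lemma epsZ_zero (b b') : epsZ 0 b b' = ind (b = b') := rfl
lemma epsZ_succ (m b b') : epsZ (m+1) b b'
    = (if b then 1 else 0) * epsZ m false b' + (-1) * epsZ m true b' := rfl

/-- Splitting of the domination condition at an eliminated column. -/
lemma dom_split (V E : Finset ℕ) (v f : ℕ) (hfE : f ∈ E) (hadj : nadj v f)
    (honly : ∀ u ∈ V, nadj u f → u = v) (R Q : Finset ℕ) (hR : R ⊆ V) (hQ : Q ⊆ V) :
    ndom R Q E ↔ ((v ∈ R ∪ Q) ∧ ndom (R.erase v) (Q.erase v) (E.filter (fun e => ¬ nadj v e))) := by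
  constructor
  · intro h
    constructor
    · obtain ⟨r, hr, hrf⟩ := h f hfE
      have hrV : r ∈ V := by
        rcases mem_union.mp hr with h' | h'
        · exact hR h'
        · exact hQ h'
      rwa [honly r hrV hrf] at hr
    · intro e he
      obtain ⟨heE, hev⟩ := Finset.mem_filter.mp he
      obtain ⟨r, hr, hre⟩ := h e heE
      have hrv : r ≠ v := fun hc => hev (hc ▸ hre)
      refine ⟨r, ?_, hre⟩
      rcases mem_union.mp hr with h' | h'
      · exact mem_union_left _ (Finset.mem_erase.mpr ⟨hrv, h'⟩)
      · exact mem_union_right _ (Finset.mem_erase.mpr ⟨hrv, h'⟩)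
  · rintro ⟨hv, h⟩ e heE
    by_cases hve : nadj v e
    · exact ⟨v, hv, hve⟩
    · obtain ⟨r, hr, hre⟩ := h e (Finset.mem_filter.mpr ⟨heE, hve⟩)
      refine ⟨r, ?_, hre⟩
      rcases mem_union.mp hr with h' | h'
      · exact mem_union_left _ (Finset.mem_of_mem_erase h')
      · exact mem_union_right _ (Finset.mem_of_mem_erase h')

/-- Elimination of a forced column. -/
lemma elim (V E : Finset ℕ) (v f : ℕ) (hv : v ∈ V) (hfE : f ∈ E) (hadj : nadj v f)
    (honly : ∀ u ∈ V, nadj u f → u = v) :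
    ∀ (m : ℕ) (R R' : Finset ℕ), R ⊆ V → R' ⊆ V →
    Zc V E m R R' = epsZ m (decide (v ∈ R)) (decide (v ∈ R')) *
      Zc (V.erase v) (E.filter (fun e => ¬ nadj v e)) m (R.erase v) (R'.erase v) := by
  intro m
  induction m with
  | zero =>
    intro R R' hR hR'
    rw [Zc_zero, Zc_zero, epsZ_zero]
    by_cases h : R = R'
    · subst h
      simp [ind]
    · rw [ind_false h]
      by_cases h2 : R.erase v = R'.erase v
      · have hne : decide (v ∈ R) ≠ decide (v ∈ R') := by
          intro hc
          apply h
          have : v ∈ R ↔ v ∈ R' := by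
            constructor <;> intro hm <;> [skip; skip] <;>
            · by_contra hnm
              simp [hm, hnm] at hc
          ext a
          by_cases hav : a = v
          · subst hav; exact this
          · constructor <;> intro ha
            · exact Finset.mem_of_mem_erase (h2 ▸ Finset.mem_erase.mpr ⟨hav, ha⟩)
            · exact Finset.mem_of_mem_erase (h2.symm ▸ Finset.mem_erase.mpr ⟨hav, ha⟩)
        rw [ind_false (fun hc => hne (by rw [hc]))]
        ring
      · rw [ind_false h2]
        ring
  | succ m IH =>
    intro R R' hR hR'
    have hvV' : v ∉ V.erase v := Finset.notMem_erase v V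
    have hins : insert v (V.erase v) = V := Finset.insert_erase hv
    have hsplit := Finset.sum_powerset_insert (s := V.erase v) (a := v) hvV'
      (f := fun Q => ind (ndom R Q E) * ((-1:ℤ)^Q.card * Zc V E m Q R'))
    rw [hins] at hsplit
    rw [Zc_succ, hsplit]
    have hsum1 : ∑ Q ∈ (V.erase v).powerset,
        ind (ndom R Q E) * ((-1:ℤ)^Q.card * Zc V E m Q R')
        = (if decide (v ∈ R) then (1:ℤ) else 0) * epsZ m false (decide (v ∈ R')) *
          Zc (V.erase v) (E.filter (fun e => ¬ nadj v e)) (m+1) (R.erase v) (R'.erase v) := by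
      rw [Zc_succ, Finset.mul_sum]
      apply Finset.sum_congr rfl
      intro Q hQ
      have hQsub : Q ⊆ V.erase v := mem_powerset.mp hQ
      have hvQ : v ∉ Q := fun hc => hvV' (hQsub hc)
      have hQV : Q ⊆ V := hQsub.trans (Finset.erase_subset _ _)
      rw [IH Q R' hQV hR']
      rw [ind_congr (dom_split V E v f hfE hadj honly R Q hR hQV)]
      rw [ind_and]
      have hQe : Q.erase v = Q := Finset.erase_eq_of_notMem hvQ
      have hvRQ : (v ∈ R ∪ Q) ↔ (v ∈ R) := by
        rw [mem_union]; constructor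
        · rintro (h | h); exact h; exact absurd h hvQ
        · exact fun h => Or.inl h
      rw [ind_congr hvRQ, hQe]
      have hdec : decide (v ∈ Q) = false := by simp [hvQ]
      rw [hdec]
      have hindR : ind (v ∈ R) = (if decide (v ∈ R) then (1:ℤ) else 0) := by
        by_cases h : v ∈ R <;> simp [ind, h]
      rw [hindR]
      ring
    have hsum2 : ∑ Q ∈ (V.erase v).powerset,
        ind (ndom R (insert v Q) E) * ((-1:ℤ)^(insert v Q).card * Zc V E m (insert v Q) R')
        = (-1) * epsZ m true (decide (v ∈ R')) *
          Zc (V.erase v) (E.filter (fun e => ¬ nadj v e)) (m+1) (R.erase v) (R'.erase v) := by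
      rw [Zc_succ, Finset.mul_sum]
      apply Finset.sum_congr rfl
      intro Q hQ
      have hQsub : Q ⊆ V.erase v := mem_powerset.mp hQ
      have hvQ : v ∉ Q := fun hc => hvV' (hQsub hc)
      have hQV : insert v Q ⊆ V := by
        intro a ha
        rcases Finset.mem_insert.mp ha with h | h
        · exact h ▸ hv
        · exact (Finset.erase_subset _ _) (hQsub h)
      rw [IH (insert v Q) R' hQV hR']
      rw [ind_congr (dom_split V E v f hfE hadj honly R (insert v Q) hR hQV)]
      rw [ind_and]
      have hQe : (insert v Q).erase v = Q := by
        rw [Finset.erase_insert hvQ]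
      have hvRQ : (v ∈ R ∪ insert v Q) := mem_union_right _ (Finset.mem_insert_self v Q)
      rw [ind_true hvRQ, hQe]
      have hdec : decide (v ∈ insert v Q) = true := by simp
      rw [hdec]
      have hcard : (insert v Q).card = Q.card + 1 := Finset.card_insert_of_notMem hvQ
      rw [hcard]
      ring
    rw [hsum1, hsum2, epsZ_succ]
    ring

/-- A model with no constraints and at least one column vanishes from two steps on. -/
lemma free (V : Finset ℕ) (hV : V.Nonempty) (m : ℕ) (R R' : Finset ℕ) :
    Zc V ∅ (m+2) R R' = 0 := by
  have hconst : ∀ Q₁ Q₂ R', Zc V ∅ (m+1) Q₁ R' = Zc V ∅ (m+1) Q₂ R' := by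
    intro Q₁ Q₂ R'
    rw [Zc_succ, Zc_succ]
    apply Finset.sum_congr rfl
    intro Q _
    have h1 : ndom Q₁ Q ∅ := fun e he => absurd he (Finset.notMem_empty e)
    have h2 : ndom Q₂ Q ∅ := fun e he => absurd he (Finset.notMem_empty e)
    rw [ind_true h1, ind_true h2]
  rw [Zc_succ]
  have h : ∀ Q ∈ V.powerset, ind (ndom R Q ∅) * ((-1:ℤ)^Q.card * Zc V ∅ (m+1) Q R')
      = (-1:ℤ)^Q.card * Zc V ∅ (m+1) ∅ R' := by
    intro Q _
    have h1 : ndom R Q ∅ := fun e he => absurd he (Finset.notMem_empty e)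
    rw [ind_true h1, one_mul, hconst Q ∅ R']
  rw [Finset.sum_congr rfl h, ← Finset.sum_mul, Finset.sum_powerset_neg_one_pow_card]
  rw [if_neg (Finset.nonempty_iff_ne_empty.mp hV)]
  ring

/-- A model with an unsatisfiable constraint vanishes from one step on. -/
lemma dead (V E : Finset ℕ) (e : ℕ) (heE : e ∈ E) (hnone : ∀ r ∈ V, ¬ nadj r e)
    (m : ℕ) (R R' : Finset ℕ) (hR : R ⊆ V) :
    Zc V E (m+1) R R' = 0 := by
  rw [Zc_succ]
  apply Finset.sum_eq_zero
  intro Q hQ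
  have : ¬ ndom R Q E := by
    intro h
    obtain ⟨r, hr, hre⟩ := h e heE
    rcases mem_union.mp hr with h' | h'
    · exact hnone r (hR h') hre
    · exact hnone r (mem_powerset.mp hQ h') hre
  rw [ind_false this]
  ring

/-- Variables of the free-free interval model: `{c, c+2, ..., c+6j}`. -/
def FFV (c j : ℕ) : Finset ℕ := (Finset.range (3*j+1)).image (fun i => c + 2*i)
/-- Constraint midpoints of the free-free interval model: `{c+1, c+3, ..., c+6j-1}`. -/
def FFE (c j : ℕ) : Finset ℕ := (Finset.range (3*j)).image (fun i => c + 1 + 2*i)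

lemma mem_FFV {a c j : ℕ} : a ∈ FFV c j ↔ ∃ i, i ≤ 3*j ∧ a = c + 2*i := by
  simp only [FFV, Finset.mem_image, Finset.mem_range]
  constructor
  · rintro ⟨i, hi, rfl⟩; exact ⟨i, by omega, rfl⟩
  · rintro ⟨i, hi, rfl⟩; exact ⟨i, by omega, rfl⟩

lemma mem_FFE {a c j : ℕ} : a ∈ FFE c j ↔ ∃ i, i < 3*j ∧ a = c + 1 + 2*i := by
  simp only [FFE, Finset.mem_image, Finset.mem_range]
  constructor
  · rintro ⟨i, hi, rfl⟩; exact ⟨i, hi, rfl⟩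
  · rintro ⟨i, hi, rfl⟩; exact ⟨i, hi, rfl⟩

lemma FFE_zero (c : ℕ) : FFE c 0 = ∅ := by
  ext a; simp [mem_FFE]

lemma FFV_nonempty (c j : ℕ) : (FFV c j).Nonempty :=
  ⟨c, mem_FFV.mpr ⟨0, by omega, by omega⟩⟩

/-- After the two eliminations, the dual of a free-free model is the next free-free model. -/
lemma ff_erase_vars (c j : ℕ) :
    ((FFE c (j+1)).erase (c+1)).erase (c+6*j+5) = FFV (c+3) j := by
  ext a
  simp only [Finset.mem_erase, mem_FFE, mem_FFV]
  constructor
  · rintro ⟨h2, h1, i, hi, rfl⟩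
    exact ⟨i - 1, by omega, by omega⟩
  · rintro ⟨i, hi, rfl⟩
    exact ⟨by omega, by omega, i + 1, by omega, by omega⟩

lemma ff_filter_cons (c j : ℕ) :
    ((FFV c (j+1)).filter (fun e => ¬ nadj (c+1) e)).filter (fun e => ¬ nadj (c+6*j+5) e)
      = FFE (c+3) j := by
  ext a
  simp only [Finset.mem_filter]
  simp only [mem_FFV, mem_FFE, nadj]
  constructor
  · rintro ⟨⟨⟨i, hi, rfl⟩, h1⟩, h2⟩
    push_neg at h1 h2
    exact ⟨i - 2, by omega, by omega⟩
  · rintro ⟨i, hi, rfl⟩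
    refine ⟨⟨⟨i + 2, by omega, by omega⟩, ?_⟩, ?_⟩ <;> omega

/-- Vanishing for the free-free interval models, by descent in steps of three. -/
lemma ff_vanish : ∀ (j c m : ℕ), j + 2 ≤ m → ∀ R R', R ⊆ FFV c j → R' ⊆ FFV c j →
    Zc (FFV c j) (FFE c j) m R R' = 0 := by
  intro j
  induction j with
  | zero =>
    intro c m hm R R' _ _
    obtain ⟨m', rfl⟩ : ∃ m', m = m' + 2 := ⟨m - 2, by omega⟩
    rw [FFE_zero]
    exact free _ (FFV_nonempty c 0) m' R R'
  | succ j IH =>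
    intro c m hm R R' hR hR'
    obtain ⟨m'', rfl⟩ : ∃ m'', m = m'' + 1 := ⟨m - 1, by omega⟩
    rw [dualStep _ _ _ _ _ hR']
    rw [show ∀ (x : ℤ), (-1:ℤ)^R'.card * x = (-1:ℤ)^R'.card * x from fun _ => rfl]
    have hz : ∀ P ∈ (FFE c (j+1)).powerset, ∀ P' ∈ (FFE c (j+1)).powerset,
        Zc (FFE c (j+1)) (FFV c (j+1)) m'' P P' = 0 := by
      intro P hP P' hP'
      have hPs := Finset.mem_powerset.mp hP
      have hPs' := Finset.mem_powerset.mp hP'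
      -- first elimination : v = c+1, f = c
      have hv1 : c + 1 ∈ FFE c (j+1) := mem_FFE.mpr ⟨0, by omega, by omega⟩
      have hf1 : c ∈ FFV c (j+1) := mem_FFV.mpr ⟨0, by omega, by omega⟩
      have hadj1 : nadj (c+1) c := Or.inr rfl
      have honly1 : ∀ u ∈ FFE c (j+1), nadj u c → u = c + 1 := by
        intro u hu hadj
        obtain ⟨i, hi, rfl⟩ := mem_FFE.mp hu
        rcases hadj with h | h <;> omega
      rw [elim _ _ _ _ hv1 hf1 hadj1 honly1 m'' P P' hPs hPs']
      -- second elimination : v = c+6j+5, f = c+6j+6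
      have hv2 : c + 6*j + 5 ∈ (FFE c (j+1)).erase (c+1) := by
        rw [Finset.mem_erase]
        exact ⟨by omega, mem_FFE.mpr ⟨3*j+2, by omega, by omega⟩⟩
      have hf2 : c + 6*j + 6 ∈ (FFV c (j+1)).filter (fun e => ¬ nadj (c+1) e) := by
        rw [Finset.mem_filter]
        refine ⟨mem_FFV.mpr ⟨3*j+3, by omega, by omega⟩, ?_⟩
        rw [nadj]; omega
      have hadj2 : nadj (c+6*j+5) (c+6*j+6) := Or.inl rfl
      have honly2 : ∀ u ∈ (FFE c (j+1)).erase (c+1), nadj u (c+6*j+6) → u = c+6*j+5 := by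
        intro u hu hadj
        obtain ⟨hne, hu'⟩ := Finset.mem_erase.mp hu
        obtain ⟨i, hi, rfl⟩ := mem_FFE.mp hu'
        rcases hadj with h | h <;> omega
      have hsub1 : P.erase (c+1) ⊆ (FFE c (j+1)).erase (c+1) :=
        Finset.erase_subset_erase _ hPs
      have hsub1' : P'.erase (c+1) ⊆ (FFE c (j+1)).erase (c+1) :=
        Finset.erase_subset_erase _ hPs'
      rw [elim _ _ _ _ hv2 hf2 hadj2 honly2 m'' _ _ hsub1 hsub1']
      rw [ff_erase_vars c j, ff_filter_cons c j]
      have hz2 := IH (c+3) m'' (by omega)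
        ((P.erase (c+1)).erase (c+6*j+5)) ((P'.erase (c+1)).erase (c+6*j+5))
        (by rw [← ff_erase_vars c j]; exact Finset.erase_subset_erase _ hsub1)
        (by rw [← ff_erase_vars c j]; exact Finset.erase_subset_erase _ hsub1')
      rw [hz2]
      ring
    have : ∑ P ∈ (FFE c (j+1)).powerset, ∑ P' ∈ (FFE c (j+1)).powerset,
        ind (ncompat R P) * ind (ncompat P' R') *
          ((-1:ℤ)^P.card * Zc (FFE c (j+1)) (FFV c (j+1)) m'' P P') = 0 := by
      apply Finset.sum_eq_zero
      intro P hP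
      apply Finset.sum_eq_zero
      intro P' hP'
      rw [hz P hP P' hP']
      ring
    rw [this]
    ring

/-- The odd/even residue classes below `N`. -/
def oddsBelow (N : ℕ) : Finset ℕ := (Finset.range N).filter (fun s => s % 2 = 1)
def evensBelow (N : ℕ) : Finset ℕ := (Finset.range N).filter (fun s => s % 2 = 0)

lemma mem_oddsBelow {a N : ℕ} : a ∈ oddsBelow N ↔ a < N ∧ a % 2 = 1 := by
  simp [oddsBelow]
lemma mem_evensBelow {a N : ℕ} : a ∈ evensBelow N ↔ a < N ∧ a % 2 = 0 := by
  simp [evensBelow]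

lemma odds_erase_even (N : ℕ) (hN : N % 2 = 0) (hN4 : 4 ≤ N) (hN3 : N % 3 = 1) :
    (oddsBelow N).erase 1 = FFV 3 ((N-4)/6) := by
  ext a
  simp only [Finset.mem_erase, mem_oddsBelow, mem_FFV]
  constructor
  · rintro ⟨h1, h2, h3⟩
    exact ⟨(a-3)/2, by omega, by omega⟩
  · rintro ⟨i, hi, rfl⟩
    omega

lemma evens_filter_even (N : ℕ) (hN : N % 2 = 0) (hN4 : 4 ≤ N) (hN3 : N % 3 = 1) :
    (evensBelow N).filter (fun e => ¬ nadj 1 e) = FFE 3 ((N-4)/6) := by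
  ext a
  simp only [Finset.mem_filter]
  simp only [mem_evensBelow, mem_FFE, nadj]
  constructor
  · rintro ⟨⟨h1, h2⟩, h3⟩
    push_neg at h3
    exact ⟨(a-4)/2, by omega, by omega⟩
  · rintro ⟨i, hi, rfl⟩
    omega

lemma odds_erase_odd (N : ℕ) (hN : N % 2 = 1) (hN7 : 7 ≤ N) (hN3 : N % 3 = 1) :
    ((oddsBelow N).erase 1).erase (N-2) = FFV 3 ((N-7)/6) := by
  ext a
  simp only [Finset.mem_erase, mem_oddsBelow, mem_FFV]
  constructor
  · rintro ⟨h0, h1, h2, h3⟩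
    exact ⟨(a-3)/2, by omega, by omega⟩
  · rintro ⟨i, hi, rfl⟩
    omega

lemma evens_filter_odd (N : ℕ) (hN : N % 2 = 1) (hN7 : 7 ≤ N) (hN3 : N % 3 = 1) :
    ((evensBelow N).filter (fun e => ¬ nadj 1 e)).filter (fun e => ¬ nadj (N-2) e)
      = FFE 3 ((N-7)/6) := by
  ext a
  simp only [Finset.mem_filter]
  simp only [mem_evensBelow, mem_FFE, nadj]
  constructor
  · rintro ⟨⟨⟨h1, h2⟩, h3⟩, h4⟩
    push_neg at h3 h4
    exact ⟨(a-4)/2, by omega, by omega⟩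
  · rintro ⟨i, hi, rfl⟩
    refine ⟨⟨⟨by omega, by omega⟩, ?_⟩, ?_⟩ <;> omega

/-- Main chain-model vanishing theorem. -/
lemma main_vanish (N : ℕ) (hN1 : 1 ≤ N) (hN3 : N % 3 = 1) (m : ℕ)
    (hm1 : 1 ≤ m) (hm2 : N ≠ 1 → (N-4)/6 + 2 ≤ m)
    (B B' : Finset ℕ) (hB : B ⊆ oddsBelow N) (hB' : B' ⊆ oddsBelow N) :
    Zc (oddsBelow N) (evensBelow N) m B B' = 0 := by
  rcases eq_or_lt_of_le hN1 with h1 | h1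
  · -- N = 1
    obtain ⟨m', rfl⟩ : ∃ m', m = m' + 1 := ⟨m - 1, by omega⟩
    refine dead _ _ 0 ?_ ?_ m' B B' hB
    · rw [← h1]; exact mem_evensBelow.mpr ⟨by omega, rfl⟩
    · intro r hr
      rw [← h1] at hr
      obtain ⟨hlt, _⟩ := mem_oddsBelow.mp hr
      omega
  · have hN4 : 4 ≤ N := by omega
    have hv1 : (1:ℕ) ∈ oddsBelow N := mem_oddsBelow.mpr ⟨by omega, rfl⟩
    have hf1 : (0:ℕ) ∈ evensBelow N := mem_evensBelow.mpr ⟨by omega, rfl⟩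
    have hadj1 : nadj 1 0 := Or.inr rfl
    have honly1 : ∀ u ∈ oddsBelow N, nadj u 0 → u = 1 := by
      intro u hu hadj
      obtain ⟨h1, h2⟩ := mem_oddsBelow.mp hu
      rcases hadj with h | h <;> omega
    rw [elim _ _ _ _ hv1 hf1 hadj1 honly1 m B B' hB hB']
    rcases Nat.even_or_odd N with hNe | hNo
    · -- N even, N ≡ 4 (mod 6)
      have hNe' : N % 2 = 0 := Nat.even_iff.mp hNe
      rw [odds_erase_even N hNe' hN4 hN3, evens_filter_even N hNe' hN4 hN3]
      have hm3 := hm2 (by omega)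
      rw [ff_vanish ((N-4)/6) 3 m (by omega) _ _
        (by rw [← odds_erase_even N hNe' hN4 hN3]; exact Finset.erase_subset_erase _ hB)
        (by rw [← odds_erase_even N hNe' hN4 hN3]; exact Finset.erase_subset_erase _ hB')]
      ring
    · -- N odd, N ≡ 1 (mod 6), N ≥ 7
      have hNo' : N % 2 = 1 := Nat.odd_iff.mp hNo
      have hN7 : 7 ≤ N := by omega
      have hv2 : N - 2 ∈ (oddsBelow N).erase 1 := by
        rw [Finset.mem_erase]
        exact ⟨by omega, mem_oddsBelow.mpr ⟨by omega, by omega⟩⟩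
      have hf2 : N - 1 ∈ (evensBelow N).filter (fun e => ¬ nadj 1 e) := by
        rw [Finset.mem_filter]
        refine ⟨mem_evensBelow.mpr ⟨by omega, by omega⟩, ?_⟩
        rw [nadj]; omega
      have hadj2 : nadj (N-2) (N-1) := Or.inl (by omega)
      have honly2 : ∀ u ∈ (oddsBelow N).erase 1, nadj u (N-1) → u = N - 2 := by
        intro u hu hadj
        obtain ⟨hne, hu'⟩ := Finset.mem_erase.mp hu
        obtain ⟨h1, h2⟩ := mem_oddsBelow.mp hu'
        rcases hadj with h | h <;> omega
      rw [elim _ _ _ _ hv2 hf2 hadj2 honly2 m _ _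
        (Finset.erase_subset_erase _ hB) (Finset.erase_subset_erase _ hB')]
      rw [odds_erase_odd N hNo' hN7 hN3, evens_filter_odd N hNo' hN7 hN3]
      have hm3 := hm2 (by omega)
      rw [ff_vanish ((N-7)/6) 3 m (by omega) _ _
        (by rw [← odds_erase_odd N hNo' hN7 hN3]
            exact Finset.erase_subset_erase _ (Finset.erase_subset_erase _ hB))
        (by rw [← odds_erase_odd N hNo' hN7 hN3]
            exact Finset.erase_subset_erase _ (Finset.erase_subset_erase _ hB'))]
      ring

lemma ind_mul_eq_ite {p : Prop} [Decidable p] (x : ℤ) : ind p * x = if p then x else 0 := by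
  by_cases h : p <;> simp [ind, h]

/-- Summing over the powerset of a disjoint union. -/
lemma sum_powerset_union {α : Type} [DecidableEq α] (X Y : Finset α) (hXY : Disjoint X Y)
    (f : Finset α → ℤ) :
    ∑ I ∈ (X ∪ Y).powerset, f I = ∑ S ∈ X.powerset, ∑ T ∈ Y.powerset, f (S ∪ T) := by
  rw [show (∑ S ∈ X.powerset, ∑ T ∈ Y.powerset, f (S ∪ T))
      = ∑ p ∈ X.powerset ×ˢ Y.powerset, f (p.1 ∪ p.2) from
    (Finset.sum_product X.powerset Y.powerset (fun p => f (p.1 ∪ p.2))).symm]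
  apply Finset.sum_nbij' (i := fun I => (I ∩ X, I ∩ Y)) (j := fun p => p.1 ∪ p.2)
  · intro I hI
    rw [Finset.mem_powerset] at hI
    rw [Finset.mem_product]
    exact ⟨Finset.mem_powerset.mpr Finset.inter_subset_right,
      Finset.mem_powerset.mpr Finset.inter_subset_right⟩
  · intro p hp
    rw [Finset.mem_product] at hp
    rw [Finset.mem_powerset]
    exact Finset.union_subset
      ((Finset.mem_powerset.mp hp.1).trans Finset.subset_union_left)
      ((Finset.mem_powerset.mp hp.2).trans Finset.subset_union_right)
  · intro I hI
    rw [Finset.mem_powerset] at hI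
    rw [← Finset.inter_union_distrib_left]
    exact Finset.inter_eq_left.mpr hI
  · rintro ⟨S, T⟩ hp
    rw [Finset.mem_product] at hp
    obtain ⟨h1, h2⟩ := hp
    rw [Finset.mem_powerset] at h1 h2
    dsimp only at h1 h2 ⊢
    have e1 : (S ∪ T) ∩ X = S := by
      rw [Finset.union_inter_distrib_right, Finset.inter_eq_left.mpr h1,
        Finset.disjoint_iff_inter_eq_empty.mp (hXY.symm.mono_left h2), Finset.union_empty]
    have e2 : (S ∪ T) ∩ Y = T := by
      rw [Finset.union_inter_distrib_right, Finset.inter_eq_left.mpr h2,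
        Finset.disjoint_iff_inter_eq_empty.mp (hXY.mono_left h1), Finset.empty_union]
    rw [e1, e2]
  · intro I hI
    rw [Finset.mem_powerset] at hI
    dsimp only
    rw [← Finset.inter_union_distrib_left, Finset.inter_eq_left.mpr hI]

lemma ZL_one (V W : Finset ℕ) (A A' : Finset ℕ) :
    ZL V W 1 A A' = ind (A' ⊆ W) * ind (ncompat A A') * (-1:ℤ)^A'.card := by
  rw [ZL_succ]
  have h : ∀ B ∈ W.powerset, ind (ncompat A B) * ((-1:ℤ)^B.card * ZL W V 0 B A')
      = ind (B = A') * (ind (ncompat A B) * (-1:ℤ)^B.card) := by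
    intro B _
    rw [ZL_zero]
    by_cases h : B = A' <;> simp [ind, h]
  rw [Finset.sum_congr rfl h, sum_powerset_ind_eq]
  ring

/-- Residue class below `N` matching the parity of `u`. -/
def clsOf (N u : ℕ) : Finset ℕ := (Finset.range N).filter (fun s => s % 2 = u % 2)

lemma mem_clsOf {N u a : ℕ} : a ∈ clsOf N u ↔ a < N ∧ a % 2 = u % 2 := by
  simp [clsOf]

lemma clsOf_congr {N u u' : ℕ} (h : u % 2 = u' % 2) : clsOf N u = clsOf N u' := by
  ext a; simp [mem_clsOf, h]

lemma clsOf_zero (N : ℕ) : clsOf N 0 = evensBelow N := by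
  ext a; simp [mem_clsOf, mem_evensBelow]
lemma clsOf_one (N : ℕ) : clsOf N 1 = oddsBelow N := by
  ext a; simp [mem_clsOf, mem_oddsBelow]
end AltZAux

namespace AltZGeo
open Finset AltZAux

lemma gridAdj_iff {p q : ℤ×ℤ} : GridAdj p q ↔
    ((p.1 - q.1 = 0 ∧ (p.2 - q.2 = 1 ∨ p.2 - q.2 = -1)) ∨
     ((p.1 - q.1 = 1 ∨ p.1 - q.1 = -1) ∧ p.2 - q.2 = 0)) := by
  unfold GridAdj
  rcases abs_cases (p.1 - q.1) with ⟨h1, h1'⟩ | ⟨h1, h1'⟩ <;>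
    rcases abs_cases (p.2 - q.2) with ⟨h2, h2'⟩ | ⟨h2, h2'⟩ <;> omega

lemma gridAdj_comm {p q : ℤ×ℤ} : GridAdj p q ↔ GridAdj q p := by
  rw [gridAdj_iff, gridAdj_iff]; omega

lemma mem_rectR {M N : ℕ} {p : ℤ×ℤ} : p ∈ rectR M N ↔
    p.2 ≤ p.1 ∧ p.1 ≤ p.2 + M - 1 ∧ -p.2 ≤ p.1 ∧ p.1 ≤ -p.2 + N - 1 := by
  unfold rectR
  rw [Finset.mem_filter]
  constructor
  · tauto
  · intro h
    refine ⟨?_, h⟩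
    obtain ⟨h1, h2, h3, h4⟩ := h
    rw [Finset.mem_product, Finset.mem_Icc, Finset.mem_Icc]
    constructor <;> constructor <;> omega

/-- The diagonal `x - y = u` of the rectangle. -/
noncomputable def diagF (M N u : ℕ) : Finset (ℤ×ℤ) := (rectR M N).filter (fun p => p.1 - p.2 = (u:ℤ))

lemma mem_diagF {M N u : ℕ} {p : ℤ×ℤ} :
    p ∈ diagF M N u ↔ p ∈ rectR M N ∧ p.1 - p.2 = (u:ℤ) := Finset.mem_filter

/-- The part of the rectangle strictly beyond diagonal `u`. -/
noncomputable def Rgn (M N u : ℕ) : Finset (ℤ×ℤ) := (rectR M N).filter (fun p => (u:ℤ) < p.1 - p.2)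

lemma mem_Rgn {M N u : ℕ} {p : ℤ×ℤ} :
    p ∈ Rgn M N u ↔ p ∈ rectR M N ∧ (u:ℤ) < p.1 - p.2 := Finset.mem_filter

def sOf (p : ℤ×ℤ) : ℕ := (p.1 + p.2).toNat

def liftP (u s : ℕ) : ℤ×ℤ := ((((u + s)/2 : ℕ) : ℤ), (s:ℤ) - (((u + s)/2 : ℕ) : ℤ))

lemma sOf_mem_cls {M N u : ℕ} {p : ℤ×ℤ} (hp : p ∈ diagF M N u) : sOf p ∈ clsOf N u := by
  obtain ⟨hr, hu⟩ := mem_diagF.mp hp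
  obtain ⟨h1, h2, h3, h4⟩ := mem_rectR.mp hr
  have hs : (sOf p : ℤ) = p.1 + p.2 := Int.toNat_of_nonneg (by omega)
  rw [mem_clsOf]
  omega

lemma liftP_mem_diag {M N u : ℕ} (hu : u < M) {s : ℕ} (hs : s ∈ clsOf N u) :
    liftP u s ∈ diagF M N u := by
  obtain ⟨hsN, hpar⟩ := mem_clsOf.mp hs
  have h2 : 2 * ((u + s)/2) = u + s := by omega
  rw [mem_diagF, mem_rectR, liftP]
  constructor
  · refine ⟨?_, ?_, ?_, ?_⟩ <;> (dsimp only; omega)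
  · dsimp only; omega

lemma sOf_liftP {u s : ℕ} : sOf (liftP u s) = s := by
  rw [sOf, liftP]
  dsimp only
  omega

lemma liftP_sOf {M N u : ℕ} {p : ℤ×ℤ} (hp : p ∈ diagF M N u) : liftP u (sOf p) = p := by
  obtain ⟨hr, hu⟩ := mem_diagF.mp hp
  obtain ⟨h1, h2, h3, h4⟩ := mem_rectR.mp hr
  have hs : (sOf p : ℤ) = p.1 + p.2 := Int.toNat_of_nonneg (by omega)
  have h2d : 2 * ((u + sOf p)/2) = u + sOf p := by omega
  rw [liftP]
  have hx : (((u + sOf p)/2 : ℕ) : ℤ) = p.1 := by omega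
  rw [hx]
  have hy : (sOf p : ℤ) - p.1 = p.2 := by omega
  rw [hy]

lemma sOf_injOn {M N u : ℕ} {p q : ℤ×ℤ} (hp : p ∈ diagF M N u) (hq : q ∈ diagF M N u)
    (h : sOf p = sOf q) : p = q := by
  rw [← liftP_sOf (M := M) (N := N) hp, ← liftP_sOf (M := M) (N := N) hq, h]

lemma gridAdj_iff_nadj {M N u : ℕ} {p q : ℤ×ℤ}
    (hp : p ∈ diagF M N u) (hq : q ∈ diagF M N (u+1)) :
    GridAdj p q ↔ nadj (sOf p) (sOf q) := by
  obtain ⟨hr, hu⟩ := mem_diagF.mp hp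
  obtain ⟨hr', hu'⟩ := mem_diagF.mp hq
  obtain ⟨h1, h2, h3, h4⟩ := mem_rectR.mp hr
  obtain ⟨h1', h2', h3', h4'⟩ := mem_rectR.mp hr'
  have hs : (sOf p : ℤ) = p.1 + p.2 := Int.toNat_of_nonneg (by omega)
  have hs' : (sOf q : ℤ) = q.1 + q.2 := Int.toNat_of_nonneg (by omega)
  rw [gridAdj_iff, nadj]
  omega

/-- Transport a powerset sum along the diagonal parameterisation. -/
lemma sum_diag_transport {M N : ℕ} (u : ℕ) (hu : u < M)
    (f : Finset (ℤ×ℤ) → ℤ) (g : Finset ℕ → ℤ)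
    (hfg : ∀ S, S ⊆ diagF M N u → f S = g (S.image sOf)) :
    ∑ S ∈ (diagF M N u).powerset, f S = ∑ T ∈ (clsOf N u).powerset, g T := by
  apply Finset.sum_nbij' (i := fun S => S.image sOf) (j := fun T => T.image (liftP u))
  · intro S hS
    rw [Finset.mem_powerset] at hS ⊢
    intro a ha
    obtain ⟨p, hp, rfl⟩ := Finset.mem_image.mp ha
    exact sOf_mem_cls (hS hp)
  · intro T hT
    rw [Finset.mem_powerset] at hT ⊢
    intro p hp
    obtain ⟨s, hs, rfl⟩ := Finset.mem_image.mp hp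
    exact liftP_mem_diag hu (hT hs)
  · intro S hS
    rw [Finset.mem_powerset] at hS
    rw [Finset.image_image]
    calc S.image (liftP u ∘ sOf) = S.image id := by
          apply Finset.image_congr
          intro p hp
          exact liftP_sOf (hS hp)
      _ = S := Finset.image_id
  · intro T hT
    rw [Finset.mem_powerset] at hT
    rw [Finset.image_image]
    calc T.image (sOf ∘ liftP u) = T.image id := by
          apply Finset.image_congr
          intro s _
          exact sOf_liftP
      _ = T := Finset.image_id
  · intro S hS
    exact hfg S (Finset.mem_powerset.mp hS)

lemma card_image_sOf {M N u : ℕ} {S : Finset (ℤ×ℤ)} (hS : S ⊆ diagF M N u) :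
    (S.image sOf).card = S.card := by
  apply Finset.card_image_of_injOn
  intro p hp q hq h
  exact sOf_injOn (hS hp) (hS hq) h

/-- Independence and compatibility of point sets. -/
def indepG (I : Finset (ℤ×ℤ)) : Prop := ∀ p ∈ I, ∀ q ∈ I, ¬ GridAdj p q
instance : ∀ I, Decidable (indepG I) := fun I => by unfold indepG; infer_instance
def compatG (A B : Finset (ℤ×ℤ)) : Prop := ∀ p ∈ A, ∀ q ∈ B, ¬ GridAdj p q
instance : ∀ A B, Decidable (compatG A B) := fun A B => by unfold compatG; infer_instance

lemma compat_transfer {M N u : ℕ} {A B : Finset (ℤ×ℤ)}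
    (hA : A ⊆ diagF M N u) (hB : B ⊆ diagF M N (u+1)) :
    compatG A B ↔ ncompat (A.image sOf) (B.image sOf) := by
  constructor
  · intro h a ha b hb hn
    obtain ⟨p, hp, rfl⟩ := Finset.mem_image.mp ha
    obtain ⟨q, hq, rfl⟩ := Finset.mem_image.mp hb
    exact h p hp q hq ((gridAdj_iff_nadj (hA hp) (hB hq)).mpr hn)
  · intro h p hp q hq hadj
    exact h (sOf p) (Finset.mem_image_of_mem _ hp) (sOf q) (Finset.mem_image_of_mem _ hq)
      ((gridAdj_iff_nadj (hA hp) (hB hq)).mp hadj)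

lemma indep_of_diag {M N u : ℕ} {S : Finset (ℤ×ℤ)} (hS : S ⊆ diagF M N u) : indepG S := by
  intro p hp q hq
  have h1 := (mem_diagF.mp (hS hp)).2
  have h2 := (mem_diagF.mp (hS hq)).2
  rw [gridAdj_iff]
  omega

lemma compat_far {u : ℤ} {A B : Finset (ℤ×ℤ)}
    (hA : ∀ p ∈ A, p.1 - p.2 = u) (hB : ∀ q ∈ B, u + 2 ≤ q.1 - q.2) : compatG A B := by
  intro p hp q hq
  have h1 := hA p hp
  have h2 := hB q hq
  rw [gridAdj_iff]
  omega

lemma indep_union_iff {S T : Finset (ℤ×ℤ)} :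
    indepG (S ∪ T) ↔ indepG S ∧ indepG T ∧ compatG S T := by
  constructor
  · intro h
    refine ⟨fun p hp q hq => h p (mem_union_left _ hp) q (mem_union_left _ hq),
      fun p hp q hq => h p (mem_union_right _ hp) q (mem_union_right _ hq),
      fun p hp q hq => h p (mem_union_left _ hp) q (mem_union_right _ hq)⟩
  · rintro ⟨h1, h2, h3⟩ p hp q hq
    rcases mem_union.mp hp with hp' | hp' <;> rcases mem_union.mp hq with hq' | hq'
    · exact h1 p hp' q hq'
    · exact h3 p hp' q hq'
    · intro hadj; exact h3 q hq' p hp' (gridAdj_comm.mp hadj)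
    · exact h2 p hp' q hq'

lemma compat_union_iff {A S T : Finset (ℤ×ℤ)} :
    compatG A (S ∪ T) ↔ compatG A S ∧ compatG A T := by
  constructor
  · intro h
    exact ⟨fun p hp q hq => h p hp q (mem_union_left _ hq),
      fun p hp q hq => h p hp q (mem_union_right _ hq)⟩
  · rintro ⟨h1, h2⟩ p hp q hq
    rcases mem_union.mp hq with hq' | hq'
    · exact h1 p hp q hq'
    · exact h2 p hp q hq'

/-- The tail generating function with final boundary `D`. -/
noncomputable def G (M N : ℕ) (D : Finset (ℤ×ℤ)) (u : ℕ) (A : Finset (ℤ×ℤ)) : ℤ :=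
  ∑ I ∈ (Rgn M N u).powerset,
    ind (indepG I ∧ compatG A I ∧ I.filter (fun p => p.1 - p.2 = (M:ℤ) - 1) = D)
      * (-1:ℤ)^I.card

lemma image_sOf_subset_cls {M N u : ℕ} {S : Finset (ℤ×ℤ)} (hS : S ⊆ diagF M N u) :
    S.image sOf ⊆ clsOf N u := by
  intro a ha
  obtain ⟨p, hp, rfl⟩ := Finset.mem_image.mp ha
  exact sOf_mem_cls (hS hp)

lemma G_base {M N : ℕ} (hM : 2 ≤ M) (D : Finset (ℤ×ℤ)) (hD : D ⊆ diagF M N (M-1))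
    (A : Finset (ℤ×ℤ)) :
    G M N D (M-2) A = ind (compatG A D) * (-1:ℤ)^D.card := by
  have hcast : ((M-1 : ℕ) : ℤ) = (M:ℤ) - 1 := by omega
  have hRgn : Rgn M N (M-2) = diagF M N (M-1) := by
    ext p
    rw [mem_Rgn, mem_diagF]
    constructor
    · rintro ⟨hr, h⟩
      refine ⟨hr, ?_⟩
      have h2 := (mem_rectR.mp hr).2.1
      omega
    · rintro ⟨hr, h⟩
      exact ⟨hr, by omega⟩
  rw [G, hRgn]
  have hterm : ∀ I ∈ (diagF M N (M-1)).powerset,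
      ind (indepG I ∧ compatG A I ∧ I.filter (fun p => p.1 - p.2 = (M:ℤ) - 1) = D)
        * (-1:ℤ)^I.card
      = ind (I = D) * (ind (compatG A D) * (-1:ℤ)^I.card) := by
    intro I hI
    rw [Finset.mem_powerset] at hI
    have hfil : I.filter (fun p => p.1 - p.2 = (M:ℤ) - 1) = I := by
      apply Finset.filter_true_of_mem
      intro p hp
      have h := (mem_diagF.mp (hI hp)).2
      omega
    by_cases h : I = D
    · rw [ind_true h, one_mul]
      have hiff : (indepG I ∧ compatG A I ∧ I.filter (fun p => p.1 - p.2 = (M:ℤ) - 1) = D)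
          ↔ compatG A D := by
        constructor
        · rintro ⟨_, hc, _⟩; rw [← h]; exact hc
        · intro hc
          exact ⟨indep_of_diag hI, by rw [h]; exact hc, by rw [hfil]; exact h⟩
      rw [ind_congr hiff]
    · rw [ind_false h, zero_mul, ind_false]
      · ring
      · rintro ⟨_, _, hc⟩
        exact h (hfil ▸ hc)
  rw [Finset.sum_congr rfl hterm, sum_powerset_ind_eq, ind_true hD, one_mul]

lemma G_rec {M N : ℕ} (D : Finset (ℤ×ℤ)) {u : ℕ} (hu : u + 2 ≤ M - 1) (hM : 1 ≤ M)
    (A : Finset (ℤ×ℤ)) (hA : A ⊆ diagF M N u) :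
    G M N D u A = ∑ S ∈ (diagF M N (u+1)).powerset,
      ind (compatG A S) * ((-1:ℤ)^S.card * G M N D (u+1) S) := by
  have hsplit : Rgn M N u = diagF M N (u+1) ∪ Rgn M N (u+1) := by
    ext p
    rw [mem_Rgn, Finset.mem_union, mem_diagF, mem_Rgn]
    constructor
    · rintro ⟨hr, h⟩
      by_cases h2 : p.1 - p.2 = ((u+1 : ℕ) : ℤ)
      · exact Or.inl ⟨hr, h2⟩
      · exact Or.inr ⟨hr, by omega⟩
    · rintro (⟨hr, h⟩ | ⟨hr, h⟩) <;> exact ⟨hr, by omega⟩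
  have hdisj : Disjoint (diagF M N (u+1)) (Rgn M N (u+1)) := by
    rw [Finset.disjoint_left]
    intro p hp hp2
    have h1 := (mem_diagF.mp hp).2
    have h2 := (mem_Rgn.mp hp2).2
    omega
  rw [G, hsplit, sum_powerset_union _ _ hdisj]
  apply Finset.sum_congr rfl
  intro S hS
  rw [Finset.mem_powerset] at hS
  rw [G, Finset.mul_sum, Finset.mul_sum]
  apply Finset.sum_congr rfl
  intro T hT
  rw [Finset.mem_powerset] at hT
  have hST : Disjoint S T := by
    rw [Finset.disjoint_left]
    intro p hp hp2
    have h1 := (mem_diagF.mp (hS hp)).2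
    have h2 := (mem_Rgn.mp (hT hp2)).2
    omega
  have hcard : (S ∪ T).card = S.card + T.card := Finset.card_union_of_disjoint hST
  have hfilS : S.filter (fun p => p.1 - p.2 = (M:ℤ) - 1) = ∅ := by
    rw [Finset.filter_eq_empty_iff]
    intro p hp
    have h := (mem_diagF.mp (hS hp)).2
    omega
  have hfil : (S ∪ T).filter (fun p => p.1 - p.2 = (M:ℤ) - 1)
      = T.filter (fun p => p.1 - p.2 = (M:ℤ) - 1) := by
    rw [Finset.filter_union, hfilS, Finset.empty_union]
  have hcompatAT : compatG A T := by
    apply compat_far (u := (u:ℤ))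
    · intro p hp; exact (mem_diagF.mp (hA hp)).2
    · intro q hq
      have h := (mem_Rgn.mp (hT hq)).2
      omega
  have hindepS : indepG S := indep_of_diag hS
  have hiff : (indepG (S ∪ T) ∧ compatG A (S ∪ T)
        ∧ (S ∪ T).filter (fun p => p.1 - p.2 = (M:ℤ) - 1) = D)
      ↔ (compatG A S ∧ (indepG T ∧ compatG S T
        ∧ T.filter (fun p => p.1 - p.2 = (M:ℤ) - 1) = D)) := by
    rw [indep_union_iff, compat_union_iff, hfil]
    constructor
    · rintro ⟨⟨_, hiT, hSTc⟩, ⟨hAS, _⟩, hfd⟩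
      exact ⟨hAS, hiT, hSTc, hfd⟩
    · rintro ⟨hAS, hiT, hSTc, hfd⟩
      exact ⟨⟨hindepS, hiT, hSTc⟩, ⟨hAS, hcompatAT⟩, hfd⟩
  rw [ind_congr hiff, ind_and, hcard]
  ring

lemma G_eq_ZL {M N : ℕ} (D : Finset (ℤ×ℤ)) (hD : D ⊆ diagF M N (M-1)) :
    ∀ (m u : ℕ), u + m = M - 1 → 1 ≤ m → ∀ A, A ⊆ diagF M N u →
    G M N D u A = ZL (clsOf N u) (clsOf N (u+1)) m (A.image sOf) (D.image sOf) := by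
  intro m
  induction m with
  | zero => intro u _ h1; omega
  | succ m IH =>
    intro u hum _ A hA
    rcases Nat.eq_zero_or_pos m with hm0 | hm1
    · subst hm0
      have hM2 : 2 ≤ M := by omega
      have hu : u = M - 2 := by omega
      subst hu
      have hu1 : M - 2 + 1 = M - 1 := by omega
      rw [G_base hM2 D hD A, ZL_one, hu1]
      rw [ind_true (image_sOf_subset_cls hD), one_mul]
      rw [ind_congr (compat_transfer hA (hu1 ▸ hD)), card_image_sOf hD]
    · have hu2 : u + 2 ≤ M - 1 := by omega
      have hM1 : 1 ≤ M := by omega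
      rw [G_rec D hu2 hM1 A hA, ZL_succ]
      apply sum_diag_transport (u+1) (by omega)
      intro S hS
      rw [IH (u+1) (by omega) hm1 S hS]
      rw [clsOf_congr (show (u+1+1) % 2 = u % 2 by omega)]
      rw [ind_congr (compat_transfer hA hS), card_image_sOf hS]

lemma altZ_eq_G {M N : ℕ} (hM : 2 ≤ M) (C D : Finset (ℤ×ℤ)) (hC : C ⊆ diagF M N 0) :
    altZBorderR M N C D = (-1:ℤ)^C.card * G M N D 0 C := by
  rw [altZBorderR, Finset.sum_filter]
  have hconv : ∀ I ∈ (rectR M N).powerset,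
      (if ((∀ p ∈ I, ∀ q ∈ I, ¬ GridAdj p q)
        ∧ I.filter (fun p => p.1 - p.2 = 0) = C
        ∧ I.filter (fun p => p.1 - p.2 = (M:ℤ) - 1) = D) then (-1:ℤ)^I.card else 0)
      = ind (indepG I ∧ I.filter (fun p => p.1 - p.2 = 0) = C
          ∧ I.filter (fun p => p.1 - p.2 = (M:ℤ) - 1) = D) * (-1:ℤ)^I.card := by
    intro I _
    unfold indepG
    by_cases h : ((∀ p ∈ I, ∀ q ∈ I, ¬ GridAdj p q) ∧ I.filter (fun p => p.1 - p.2 = 0) = C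
        ∧ I.filter (fun p => p.1 - p.2 = (M:ℤ) - 1) = D)
    · rw [if_pos h, ind_true h, one_mul]
    · rw [if_neg h, ind_false h, zero_mul]
  rw [Finset.sum_congr rfl hconv]
  have hsplit : rectR M N = diagF M N 0 ∪ Rgn M N 0 := by
    ext p
    rw [Finset.mem_union, mem_diagF, mem_Rgn]
    constructor
    · intro hr
      have h := (mem_rectR.mp hr).1
      by_cases h0 : p.1 - p.2 = ((0:ℕ):ℤ)
      · exact Or.inl ⟨hr, h0⟩
      · exact Or.inr ⟨hr, by omega⟩
    · rintro (⟨hr, _⟩ | ⟨hr, _⟩) <;> exact hr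
  have hdisj : Disjoint (diagF M N 0) (Rgn M N 0) := by
    rw [Finset.disjoint_left]
    intro p hp hp2
    have h1 := (mem_diagF.mp hp).2
    have h2 := (mem_Rgn.mp hp2).2
    omega
  rw [hsplit, sum_powerset_union _ _ hdisj]
  have hterm : ∀ S ∈ (diagF M N 0).powerset,
      (∑ T ∈ (Rgn M N 0).powerset,
        ind (indepG (S ∪ T) ∧ (S ∪ T).filter (fun p => p.1 - p.2 = 0) = C
          ∧ (S ∪ T).filter (fun p => p.1 - p.2 = (M:ℤ) - 1) = D) * (-1:ℤ)^(S ∪ T).card)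
      = ind (S = C) * ((-1:ℤ)^S.card *
          ∑ T ∈ (Rgn M N 0).powerset,
            ind (indepG T ∧ compatG S T
              ∧ T.filter (fun p => p.1 - p.2 = (M:ℤ) - 1) = D) * (-1:ℤ)^T.card) := by
    intro S hS
    rw [Finset.mem_powerset] at hS
    rw [Finset.mul_sum, Finset.mul_sum]
    apply Finset.sum_congr rfl
    intro T hT
    rw [Finset.mem_powerset] at hT
    have hST : Disjoint S T := by
      rw [Finset.disjoint_left]
      intro p hp hp2
      have h1 := (mem_diagF.mp (hS hp)).2
      have h2 := (mem_Rgn.mp (hT hp2)).2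
      omega
    have hcard : (S ∪ T).card = S.card + T.card := Finset.card_union_of_disjoint hST
    have hfilS0 : S.filter (fun p => p.1 - p.2 = 0) = S := by
      apply Finset.filter_true_of_mem
      intro p hp
      have h := (mem_diagF.mp (hS hp)).2
      omega
    have hfilT0 : T.filter (fun p => p.1 - p.2 = 0) = ∅ := by
      rw [Finset.filter_eq_empty_iff]
      intro p hp
      have h := (mem_Rgn.mp (hT hp)).2
      omega
    have hfilSM : S.filter (fun p => p.1 - p.2 = (M:ℤ) - 1) = ∅ := by
      rw [Finset.filter_eq_empty_iff]
      intro p hp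
      have h := (mem_diagF.mp (hS hp)).2
      omega
    have hfil0 : (S ∪ T).filter (fun p => p.1 - p.2 = 0) = S := by
      rw [Finset.filter_union, hfilS0, hfilT0, Finset.union_empty]
    have hfilM : (S ∪ T).filter (fun p => p.1 - p.2 = (M:ℤ) - 1)
        = T.filter (fun p => p.1 - p.2 = (M:ℤ) - 1) := by
      rw [Finset.filter_union, hfilSM, Finset.empty_union]
    have hindepS : indepG S := indep_of_diag hS
    have hiff : (indepG (S ∪ T) ∧ (S ∪ T).filter (fun p => p.1 - p.2 = 0) = C
          ∧ (S ∪ T).filter (fun p => p.1 - p.2 = (M:ℤ) - 1) = D)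
        ↔ (S = C ∧ (indepG T ∧ compatG S T
          ∧ T.filter (fun p => p.1 - p.2 = (M:ℤ) - 1) = D)) := by
      rw [indep_union_iff, hfil0, hfilM]
      constructor
      · rintro ⟨⟨_, hiT, hSTc⟩, hfc, hfd⟩
        exact ⟨hfc, hiT, hSTc, hfd⟩
      · rintro ⟨hfc, hiT, hSTc, hfd⟩
        exact ⟨⟨hindepS, hiT, hSTc⟩, hfc, hfd⟩
    rw [ind_congr hiff, ind_and, hcard]
    ring
  rw [Finset.sum_congr rfl hterm, sum_powerset_ind_eq, ind_true hC, one_mul, G]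

lemma altZ_zero_of_C {M N : ℕ} (C D : Finset (ℤ×ℤ)) (hC : ¬ C ⊆ diagF M N 0) :
    altZBorderR M N C D = 0 := by
  rw [altZBorderR]
  rw [Finset.filter_eq_empty_iff.mpr, Finset.sum_empty]
  rintro I hI ⟨_, hfC, _⟩
  apply hC
  intro p hp
  rw [← hfC] at hp
  obtain ⟨hpI, hp0⟩ := Finset.mem_filter.mp hp
  rw [mem_diagF]
  exact ⟨Finset.mem_powerset.mp hI hpI, by omega⟩

lemma altZ_zero_of_D {M N : ℕ} (hM : 1 ≤ M) (C D : Finset (ℤ×ℤ))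
    (hD : ¬ D ⊆ diagF M N (M-1)) :
    altZBorderR M N C D = 0 := by
  rw [altZBorderR]
  rw [Finset.filter_eq_empty_iff.mpr, Finset.sum_empty]
  rintro I hI ⟨_, _, hfD⟩
  apply hD
  intro p hp
  rw [← hfD] at hp
  obtain ⟨hpI, hp0⟩ := Finset.mem_filter.mp hp
  rw [mem_diagF]
  exact ⟨Finset.mem_powerset.mp hI hpI, by omega⟩

lemma pow_half_ge : ∀ N : ℕ, 1 ≤ N → N ≤ 2^((N+1)/2) := by
  intro N
  induction N using Nat.strong_induction_on with
  | _ N IH =>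
    intro hN
    by_cases h3 : N ≤ 3
    · interval_cases N <;> norm_num
    · have h := IH (N-2) (by omega) (by omega)
      have he : (N+1)/2 = (N-2+1)/2 + 1 := by omega
      rw [he, pow_succ]
      have : 2^((N-2+1)/2) * 2 ≥ (N-2) * 2 := Nat.mul_le_mul_right 2 h
      omega

end AltZGeo


/-- For `N ≡ 1 (mod 3)` and `M > 2^(1+⌈N/2⌉)`, the alternating number of independent
sets of `𝓡(M,N)` with prescribed borders `C` and `D` on the two extreme diagonals
of slope 1 vanishes, for all `C` and `D`. -/
theorem altZBorderR_eq_zero (M N : ℕ) (hN : 1 ≤ N) (hN3 : N % 3 = 1)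
    (hM : 2 ^ (1 + (N + 1) / 2) < M) (C D : Finset (ℤ × ℤ)) :
    altZBorderR M N C D = 0 := by
  have hpow : N ≤ 2^((N+1)/2) := AltZGeo.pow_half_ge N hN
  have h2e : 2^1 ≤ 2^((N+1)/2) := Nat.pow_le_pow_right (by norm_num) (by omega)
  rw [pow_add, pow_one] at hM
  have hM2 : 2 ≤ M := by omega
  by_cases hC : C ⊆ AltZGeo.diagF M N 0
  swap
  · exact AltZGeo.altZ_zero_of_C C D hC
  by_cases hD : D ⊆ AltZGeo.diagF M N (M-1)
  swap
  · exact AltZGeo.altZ_zero_of_D (by omega) C D hD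
  rw [AltZGeo.altZ_eq_G hM2 C D hC]
  rw [AltZGeo.G_eq_ZL D hD (M-1) 0 (by omega) (by omega) C hC]
  rw [Nat.zero_add, AltZAux.clsOf_zero, AltZAux.clsOf_one]
  have hDW := AltZGeo.image_sOf_subset_cls hD
  rcases Nat.even_or_odd M with hMe | hMo
  · -- M even, so M-1 odd
    have hMe' : M % 2 = 0 := Nat.even_iff.mp hMe
    obtain ⟨k, hk⟩ : ∃ k, M - 1 = 2*k+1 := ⟨(M-2)/2, by omega⟩
    have hkge : 2^((N+1)/2) ≤ k := by omega
    have hDodds : D.image AltZGeo.sOf ⊆ AltZAux.oddsBelow N := by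
      rw [AltZAux.clsOf_congr (show (M-1) % 2 = 1 % 2 by omega), AltZAux.clsOf_one] at hDW
      exact hDW
    rw [hk, AltZAux.ZL_succ]
    apply mul_eq_zero_of_right
    apply Finset.sum_eq_zero
    intro B hB
    rw [AltZAux.uncoll _ _ k B _ hDodds]
    rw [AltZAux.main_vanish N hN hN3 k (by omega) (fun hN1 => by omega) B _
      (Finset.mem_powerset.mp hB) hDodds]
    ring
  · -- M odd, so M-1 even
    have hMo' : M % 2 = 1 := Nat.odd_iff.mp hMo
    obtain ⟨k, hk, hk2⟩ : ∃ k, M - 1 = 2*k ∧ 2 ≤ k := ⟨(M-1)/2, by omega, by omega⟩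
    have hkge : 2^((N+1)/2) ≤ k := by omega
    have hDev : D.image AltZGeo.sOf ⊆ AltZAux.evensBelow N := by
      rw [AltZAux.clsOf_congr (show (M-1) % 2 = 0 % 2 by omega), AltZAux.clsOf_zero] at hDW
      exact hDW
    rw [hk, show 2*k = (2*(k-1)+1)+1 by omega, AltZAux.ZL_succ]
    apply mul_eq_zero_of_right
    apply Finset.sum_eq_zero
    intro B hB
    rw [AltZAux.core _ _ (k-1) B _ (Finset.mem_powerset.mp hB) hDev]
    have hz : ∀ B' ∈ (AltZAux.oddsBelow N).powerset,
        AltZAux.ind (AltZAux.ncompat B' (D.image AltZGeo.sOf)) *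
          AltZAux.Zc (AltZAux.oddsBelow N) (AltZAux.evensBelow N) (k-1) B B' = 0 := by
      intro B' hB'
      rw [AltZAux.main_vanish N hN hN3 (k-1) (by omega) (fun hN1 => by omega)
        B B' (Finset.mem_powerset.mp hB) (Finset.mem_powerset.mp hB')]
      ring
    rw [Finset.sum_eq_zero hz]
    ring
end
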